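/- arXiv:1501.04571 — 9 statements merged into one kernel-verified Lean document; each statement's English description precedes it below -/
import Mathlib

section
/- Let H be a hermitian n×n complex matrix, let α > 0 and λ ∈ ℝ. Then the Bochner integral √(α/π) · ∫_ℝ e^{−α t²} · exp(i t (H − λ·1)) dt exists and equals Σ_{κ ∈ spectrum(H)} e^{−(κ−λ)²/(4α)} · Q_κ(H). (This is the Gaussian-smeared spectral operator 𝒫_λ used to approximate spectral projections of gapped Hamiltonians.) -/
/-! Because `H` is hermitian, its eigenprojections `Q_κ` resolve the identity, and
`(H - λ) Q_κ = (κ - λ) Q_κ` gives `exp (i t (H - λ)) = Σ_κ e^{i t (κ - λ)} Q_κ`.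
The smeared operator thus splits, eigenvalue by eigenvalue, into the Fourier transform of the
Gaussian: `√(α/π) ∫ e^{-α t²} e^{i t x} dt = e^{-x²/(4α)}`. -/

open scoped Matrix.Norms.L2Operator
open MeasureTheory

/-- The orthogonal projection (as a matrix) onto the eigenspace of `H` for the (real)
eigenvalue `κ`; it is `0` when `κ` is not an eigenvalue of `H`. -/
noncomputable def eigProj {n : Type*} [Fintype n] [DecidableEq n]
    (H : Matrix n n ℂ) (κ : ℝ) : Matrix n n ℂ :=
  Matrix.toEuclideanLin.symm
    ((Module.End.eigenspace (Matrix.toEuclideanLin H) (κ : ℂ)).subtype ∘ₗ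
      (Submodule.orthogonalProjectionOnto (Module.End.eigenspace (Matrix.toEuclideanLin H) (κ : ℂ))).toLinearMap)

open NormedSpace in
theorem exp_mul_of_mul_eq_smul {𝕂 𝔸 : Type*} [RCLike 𝕂] [NormedRing 𝔸] [NormedAlgebra 𝕂 𝔸]
    [CompleteSpace 𝔸] {a p : 𝔸} {c : 𝕂} (h : a * p = c • p) :
    exp a * p = exp c • p := by
  have hpow (k : ℕ) : a ^ k * p = c ^ k • p := by
    induction k with
    | zero => simp
    | succ k ih => rw [pow_succ', mul_assoc, ih, mul_smul_comm, h, smul_smul, ← pow_succ]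
  have hsum : HasSum (fun k => ((k.factorial⁻¹ : 𝕂) • c ^ k) • p) (exp a * p) := by
    simpa only [smul_mul_assoc, hpow, smul_smul, smul_eq_mul]
      using (exp_series_hasSum_exp' (𝕂 := 𝕂) a).mul_right p
  exact hsum.unique ((exp_series_hasSum_exp' c).smul_const p)

open Module.End in
theorem LinearMap.IsSymmetric.sum_starProjection_eigenspaces {𝕜 E : Type*} [RCLike 𝕜]
    [NormedAddCommGroup E] [InnerProductSpace 𝕜 E] [FiniteDimensional 𝕜 E]
    {T : E →ₗ[𝕜] E} (hT : T.IsSymmetric) {s : Finset 𝕜} (hs : ∀ μ, HasEigenvalue T μ → μ ∈ s) :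
    ∑ μ ∈ s, (eigenspace T μ).starProjection = 1 := by
  have hspan : (⨆ μ : s, eigenspace T μ) = ⊤ := by
    refine eq_top_iff.mpr ((Submodule.orthogonal_eq_bot_iff.mp
      hT.orthogonalComplement_iSup_eigenspaces_eq_bot).ge.trans (iSup_le fun μ => ?_))
    by_cases hμ : HasEigenvalue T μ
    · exact le_iSup (fun μ : s => eigenspace T μ) ⟨μ, hs μ hμ⟩
    · rw [hasEigenvalue_iff, not_not] at hμ
      exact hμ ▸ bot_le
  ext v
  rw [← Finset.sum_coe_sort, _root_.sum_apply]
  exact (hT.orthogonalFamily_eigenspaces.comp Subtype.coe_injective).sum_projection_of_mem_iSup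
    v (hspan ▸ Submodule.mem_top)

section eigProj

open Matrix Module.End

variable {n : Type*} [Fintype n] [DecidableEq n]

theorem toEuclideanCLM_eigProj (H : Matrix n n ℂ) (κ : ℝ) :
    toEuclideanCLM (𝕜 := ℂ) (n := n) (eigProj H κ) =
      (eigenspace (toEuclideanLin H) (κ : ℂ)).starProjection := by
  apply ContinuousLinearMap.coe_injective
  rw [coe_toEuclideanCLM_eq_toEuclideanLin, eigProj, LinearEquiv.apply_symm_apply]
  rfl

theorem eigProj_eq_zero_of_not_hasEigenvalue {H : Matrix n n ℂ} {κ : ℝ}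
    (h : ¬HasEigenvalue (toEuclideanLin H) (κ : ℂ)) : eigProj H κ = 0 := by
  rw [hasEigenvalue_iff, not_not] at h
  apply EquivLike.injective (toEuclideanCLM (𝕜 := ℂ) (n := n))
  rw [toEuclideanCLM_eigProj, h, Submodule.starProjection_bot, map_zero]

theorem mul_eigProj (H : Matrix n n ℂ) (κ : ℝ) : H * eigProj H κ = (κ : ℂ) • eigProj H κ := by
  apply EquivLike.injective (toEuclideanCLM (𝕜 := ℂ) (n := n))
  rw [map_mul, map_smul, toEuclideanCLM_eigProj]
  ext1 v
  exact mem_eigenspace_iff.mp ((eigenspace (toEuclideanLin H) (κ : ℂ)).starProjection_apply_mem v)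

theorem sum_eigProj_eq_one {H : Matrix n n ℂ} (hH : H.IsHermitian) {s : Finset ℝ}
    (hs : ∀ κ : ℝ, HasEigenvalue (toEuclideanLin H) (κ : ℂ) → κ ∈ s) :
    ∑ κ ∈ s, eigProj H κ = 1 := by
  have hT : (toEuclideanLin H).IsSymmetric := isSymmetric_toEuclideanLin_iff.mpr hH
  have hs' (μ : ℂ) (hμ : HasEigenvalue (toEuclideanLin H) μ) :
      μ ∈ s.map ⟨Complex.ofReal, Complex.ofReal_injective⟩ := by
    have hre : ((μ.re : ℝ) : ℂ) = μ := Complex.conj_eq_iff_re.mp (hT.conj_eigenvalue_eq_self hμ)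
    exact Finset.mem_map.mpr ⟨μ.re, hs _ (hre ▸ hμ), hre⟩
  apply EquivLike.injective (toEuclideanCLM (𝕜 := ℂ) (n := n))
  rw [map_sum, map_one, ← hT.sum_starProjection_eigenspaces hs', Finset.sum_map]
  exact Finset.sum_congr rfl fun κ _ => toEuclideanCLM_eigProj H κ

theorem exp_smul_sub_eq_sum_eigProj {H : Matrix n n ℂ} (hH : H.IsHermitian) {s : Finset ℝ}
    (hs : ∀ κ : ℝ, HasEigenvalue (toEuclideanLin H) (κ : ℂ) → κ ∈ s) (z w : ℂ) :
    NormedSpace.exp (z • (H - w • 1)) = ∑ κ ∈ s, Complex.exp (z * (κ - w)) • eigProj H κ := by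
  calc NormedSpace.exp (z • (H - w • 1))
      = NormedSpace.exp (z • (H - w • 1)) * ∑ κ ∈ s, eigProj H κ := by
        rw [sum_eigProj_eq_one hH hs, mul_one]
    _ = _ := by
      rw [Finset.mul_sum, Complex.exp_eq_exp_ℂ]
      refine Finset.sum_congr rfl fun κ _ => exp_mul_of_mul_eq_smul ?_
      rw [smul_mul_assoc, sub_mul, mul_eigProj, smul_mul_assoc, one_mul, ← sub_smul, smul_smul]

end eigProj

section Gaussian

open Complex
open scoped Real

variable {α : ℝ}

theorem integrable_exp_neg_mul_sq_smul_cexp (hα : 0 < α) (x : ℝ) :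
    Integrable fun t : ℝ => Real.exp (-α * t ^ 2) • cexp (I * t * x) := by
  convert integrable_cexp_quadratic (b := α) (by simpa using hα) (I * x) 0 using 1
  funext t
  rw [real_smul, ofReal_exp, ← Complex.exp_add]
  push_cast
  ring_nf

theorem sqrt_smul_integral_exp_neg_mul_sq_smul_cexp (hα : 0 < α) (x : ℝ) :
    √(α / π) • ∫ t : ℝ, Real.exp (-α * t ^ 2) • cexp (I * t * x) = Real.exp (-x ^ 2 / (4 * α)) := by
  have hfourier : ∫ t : ℝ, Real.exp (-α * t ^ 2) • cexp (I * t * x) =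
      (π / α : ℂ) ^ (1 / 2 : ℂ) * cexp (-x ^ 2 / (4 * α)) := by
    rw [← fourierIntegral_gaussian (b := α) (by simpa using hα)]
    congr 1 with t
    rw [real_smul, ofReal_exp, mul_comm, mul_right_comm]
    push_cast
    ring_nf
  have hsqrt : (π / α : ℂ) ^ (1 / 2 : ℂ) = (√(π / α) : ℝ) := by
    rw [Real.sqrt_eq_rpow, ofReal_cpow (by positivity)]
    push_cast
    ring_nf
  have hone : √(α / π) * √(π / α) = 1 := by
    rw [← Real.sqrt_mul (by positivity), div_mul_div_comm, mul_comm α, div_self (by positivity),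
      Real.sqrt_one]
  rw [hfourier, hsqrt, real_smul, ← mul_assoc, ← ofReal_mul, hone, ofReal_one, one_mul, ofReal_exp]
  push_cast
  ring_nf

end Gaussian

open Complex Matrix Module.End in
/-- The Gaussian-smeared spectral operator `𝒫_λ = √(α/π) ∫ e^{-αt²} e^{it(H-λ)} dt` exists as a
Bochner integral and equals `Σ_{κ ∈ spectrum(H)} e^{-(κ-λ)²/(4α)} Q_κ(H)`. -/
theorem gaussian_smeared_spectral_operator
    {n : Type*} [Fintype n] [DecidableEq n]
    (H : Matrix n n ℂ) (hH : H.IsHermitian) (α lam : ℝ) (hα : 0 < α) :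
    Integrable (fun t : ℝ =>
        Real.exp (-α * t ^ 2) •
          NormedSpace.exp ((Complex.I * (t : ℂ)) • (H - (lam : ℂ) • 1))) ∧
    Real.sqrt (α / Real.pi) •
        (∫ t : ℝ, Real.exp (-α * t ^ 2) •
          NormedSpace.exp ((Complex.I * (t : ℂ)) • (H - (lam : ℂ) • 1))) =
      ∑ᶠ κ : ℝ, Real.exp (-(κ - lam) ^ 2 / (4 * α)) • eigProj H κ := by
  obtain ⟨s, hs⟩ : ∃ s : Finset ℝ, ∀ κ : ℝ, HasEigenvalue (toEuclideanLin H) κ → κ ∈ s :=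
    ⟨_, fun κ hκ => (((finite_hasEigenvalue _).preimage
      ofReal_injective.injOn).mem_toFinset).mpr hκ⟩
  set g : ℝ → ℝ → ℂ := fun κ t => Real.exp (-α * t ^ 2) • cexp (I * t * (κ - lam : ℝ))
  have hdecomp : (fun t : ℝ => Real.exp (-α * t ^ 2) •
      NormedSpace.exp ((I * (t : ℂ)) • (H - (lam : ℂ) • 1))) =
      fun t => ∑ κ ∈ s, g κ t • eigProj H κ := by
    funext t
    rw [exp_smul_sub_eq_sum_eigProj hH hs, Finset.smul_sum]
    refine Finset.sum_congr rfl fun κ _ => ?_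
    rw [smul_assoc, ofReal_sub]
  have hint (κ : ℝ) : Integrable fun t => g κ t • eigProj H κ :=
    (integrable_exp_neg_mul_sq_smul_cexp hα _).smul_const _
  refine ⟨hdecomp ▸ integrable_finsetSum s fun κ _ => hint κ, ?_⟩
  have hsupp : Function.support (fun κ : ℝ => Real.exp (-(κ - lam) ^ 2 / (4 * α)) • eigProj H κ)
      ⊆ s := Function.support_subset_iff'.mpr fun κ hκs => by
    simp only [eigProj_eq_zero_of_not_hasEigenvalue (mt (hs κ) hκs), smul_zero]
  rw [finsum_eq_sum_of_support_subset _ hsupp, hdecomp, integral_finsetSum s fun κ _ => hint κ,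
    Finset.smul_sum]
  refine Finset.sum_congr rfl fun κ _ => ?_
  rw [integral_smul_const, ← smul_assoc, sqrt_smul_integral_exp_neg_mul_sq_smul_cexp hα,
    coe_smul]
end

section
/- Let H be a hermitian n×n complex matrix whose spectrum is the disjoint union σ_in ∪ σ_out, with |λ − κ| ≥ g for all λ ∈ σ_in and κ ∈ σ_out, where g > 0. Let α > 0 and let a : σ_in → ℝ satisfy 0 < a_λ ≤ 1 for all λ ∈ σ_in and Σ_{λ ∈ σ_in} a_λ e^{−(κ'−λ)²/(4α)} = 1 for every κ' ∈ σ_in. Define 𝒫 := Σ_{λ ∈ σ_in} a_λ · (Σ_{κ ∈ spectrum(H)} e^{−(κ−λ)²/(4α)} Q_κ(H)) and P := Σ_{λ ∈ σ_in} Q_λ(H). Then ‖𝒫 − P‖ ≤ |σ_in| · e^{−g²/(4α)}. -/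
/-!
Both operators are functions of `H`: `𝒫 - P = ∑_κ c_κ Q_κ(H)` with
`c_κ = ∑_λ a_λ e^{-(κ-λ)²/(4α)} - [κ ∈ σ_in]`. The interpolation condition makes `c` vanish on
`σ_in`, while on `σ_out` the gap bounds every Gaussian by `e^{-g²/(4α)}`, so
`0 ≤ c_κ ≤ |σ_in| e^{-g²/(4α)}`. Since the eigenprojections of a hermitian matrix are mutually
orthogonal, Pythagoras and Bessel's inequality bound the norm of `∑_κ c_κ Q_κ(H)` by `max_κ |c_κ|`.
-/

open scoped Matrix.Norms.L2Operator
open scoped InnerProductSpace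

namespace OrthogonalFamily

variable {𝕜 E ι : Type*} [RCLike 𝕜] [NormedAddCommGroup E] [InnerProductSpace 𝕜 E]
  {V : ι → Submodule 𝕜 E} [∀ i, (V i).HasOrthogonalProjection]

theorem norm_sq_sum_smul_starProjection
    (hV : OrthogonalFamily 𝕜 (fun i => V i) fun i => (V i).subtypeₗᵢ)
    (s : Finset ι) (c : ι → 𝕜) (v : E) :
    ‖∑ i ∈ s, c i • (V i).starProjection v‖ ^ 2 =
      ∑ i ∈ s, ‖c i‖ ^ 2 * ‖(V i).starProjection v‖ ^ 2 := by
  simpa [norm_smul, mul_pow] using hV.norm_sum (fun i => c i • (V i).orthogonalProjectionOnto v) s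

theorem sum_norm_sq_starProjection_le
    (hV : OrthogonalFamily 𝕜 (fun i => V i) fun i => (V i).subtypeₗᵢ) (s : Finset ι) (v : E) :
    ∑ i ∈ s, ‖(V i).starProjection v‖ ^ 2 ≤ ‖v‖ ^ 2 := by
  set w := ∑ i ∈ s, (V i).starProjection v
  have hw : ‖w‖ ^ 2 = ∑ i ∈ s, ‖(V i).starProjection v‖ ^ 2 := by
    simpa using hV.norm_sq_sum_smul_starProjection s 1 v
  have hinner : ‖w‖ ^ 2 ≤ ‖w‖ * ‖v‖ := calc
    ‖w‖ ^ 2 = RCLike.re ⟪w, v⟫_𝕜 := by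
      simp [w, hw, sum_inner, Submodule.re_inner_starProjection_eq_normSq]
    _ ≤ ‖w‖ * ‖v‖ := re_inner_le_norm w v
  rw [← hw]
  nlinarith [norm_nonneg w, norm_nonneg v]

theorem norm_sum_smul_starProjection_le
    (hV : OrthogonalFamily 𝕜 (fun i => V i) fun i => (V i).subtypeₗᵢ)
    (s : Finset ι) {c : ι → 𝕜} {M : ℝ} (hM : 0 ≤ M) (hc : ∀ i ∈ s, ‖c i‖ ≤ M) (v : E) :
    ‖∑ i ∈ s, c i • (V i).starProjection v‖ ≤ M * ‖v‖ := by
  refine (pow_le_pow_iff_left₀ (norm_nonneg _) (by positivity) two_ne_zero).mp ?_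
  calc ‖∑ i ∈ s, c i • (V i).starProjection v‖ ^ 2
      = ∑ i ∈ s, ‖c i‖ ^ 2 * ‖(V i).starProjection v‖ ^ 2 :=
        hV.norm_sq_sum_smul_starProjection s c v
    _ ≤ ∑ i ∈ s, M ^ 2 * ‖(V i).starProjection v‖ ^ 2 := by
        gcongr with i hi
        exact hc i hi
    _ ≤ (M * ‖v‖) ^ 2 := by
        rw [← Finset.mul_sum, mul_pow]
        gcongr
        exact hV.sum_norm_sq_starProjection_le s v

end OrthogonalFamily

section eigProj

variable {n : Type*} [Fintype n] [DecidableEq n] {H : Matrix n n ℂ}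

theorem toEuclideanLin_eigProj (κ : ℝ) :
    Matrix.toEuclideanLin (eigProj H κ) =
      (Module.End.eigenspace (Matrix.toEuclideanLin H) (κ : ℂ)).starProjection.toLinearMap :=
  LinearEquiv.apply_symm_apply _ _

theorem eigProj_eq_zero_of_not_hasEigenvalue_s1 {κ : ℝ}
    (h : ¬Module.End.HasEigenvalue (Matrix.toEuclideanLin H) (κ : ℂ)) :
    eigProj H κ = 0 := by
  rw [Module.End.hasEigenvalue_iff, not_not] at h
  rw [← Matrix.toEuclideanLin.map_eq_zero_iff, toEuclideanLin_eigProj, h,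
    Submodule.starProjection_bot, ContinuousLinearMap.toLinearMap_zero]

theorem finsum_smul_eigProj_eq_sum {S : Finset ℝ}
    (hS : ∀ κ : ℝ, Module.End.HasEigenvalue (Matrix.toEuclideanLin H) (κ : ℂ) → κ ∈ S)
    (f : ℝ → ℝ) :
    ∑ᶠ κ : ℝ, f κ • eigProj H κ = ∑ κ ∈ S, f κ • eigProj H κ := by
  refine finsum_eq_sum_of_support_subset _ (Function.support_subset_iff'.mpr fun κ hκS => ?_)
  rw [eigProj_eq_zero_of_not_hasEigenvalue_s1 (mt (hS κ) hκS), smul_zero]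

theorem Matrix.IsHermitian.norm_sum_smul_eigProj_le (hH : H.IsHermitian) (S : Finset ℝ)
    {c : ℝ → ℝ} {M : ℝ} (hM : 0 ≤ M) (hc : ∀ κ ∈ S, |c κ| ≤ M) :
    ‖∑ κ ∈ S, c κ • eigProj H κ‖ ≤ M := by
  have hV := (Matrix.isSymmetric_toEuclideanLin_iff.mpr hH).orthogonalFamily_eigenspaces.comp
    Complex.ofReal_injective
  rw [← Matrix.l2_opNorm_toEuclideanCLM]
  refine ContinuousLinearMap.opNorm_le_bound _ hM fun v => ?_
  have happly : Matrix.toEuclideanLin (∑ κ ∈ S, c κ • eigProj H κ) v =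
      ∑ κ ∈ S,
        (c κ : ℂ) • (Module.End.eigenspace (Matrix.toEuclideanLin H) κ).starProjection v := by
    simp only [map_sum, LinearMap.coe_sum, Finset.sum_apply, ← Complex.coe_smul, map_smul,
      LinearMap.smul_apply, toEuclideanLin_eigProj, ContinuousLinearMap.coe_coe]
  exact (congrArg norm happly).trans_le
    (hV.norm_sum_smul_starProjection_le S hM (by simpa using hc) v)

end eigProj

theorem sum_smul_sum_sub_sum_eq_sum_smul {ι R M : Type*} [DecidableEq ι] [Ring R]
    [AddCommGroup M] [Module R M] {s S : Finset ι} (hs : s ⊆ S) (a : ι → R) (w : ι → ι → R)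
    (Q : ι → M) :
    ∑ l ∈ s, a l • ∑ k ∈ S, w k l • Q k - ∑ l ∈ s, Q l =
      ∑ k ∈ S, (∑ l ∈ s, a l * w k l - if k ∈ s then 1 else 0) • Q k := by
  simp only [sub_smul, Finset.sum_sub_distrib, Finset.smul_sum, smul_smul, Finset.sum_smul,
    ite_smul, one_smul, zero_smul, Finset.sum_ite_mem, Finset.inter_eq_right.mpr hs]
  rw [Finset.sum_comm]

theorem gaussian_le_of_le_abs {α g x : ℝ} (hα : 0 ≤ α) (hg : 0 ≤ g) (h : g ≤ |x|) :
    Real.exp (-x ^ 2 / (4 * α)) ≤ Real.exp (-g ^ 2 / (4 * α)) := by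
  have hsq : g ^ 2 ≤ x ^ 2 := sq_abs x ▸ pow_le_pow_left₀ hg h 2
  gcongr Real.exp (-?_ / _)

theorem sum_mul_gaussian_le_card_mul {σ : Finset ℝ} {a : ℝ → ℝ} {α g κ : ℝ} (hα : 0 ≤ α)
    (hg : 0 ≤ g) (ha_le : ∀ lam ∈ σ, a lam ≤ 1) (hgap : ∀ lam ∈ σ, g ≤ |lam - κ|) :
    ∑ lam ∈ σ, a lam * Real.exp (-(κ - lam) ^ 2 / (4 * α)) ≤
      σ.card * Real.exp (-g ^ 2 / (4 * α)) := by
  rw [← nsmul_eq_mul, ← Finset.sum_const]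
  exact Finset.sum_le_sum fun lam hlam =>
    (mul_le_of_le_one_left (Real.exp_nonneg _) (ha_le lam hlam)).trans
      (gaussian_le_of_le_abs hα hg (abs_sub_comm lam κ ▸ hgap lam hlam))

theorem gaussian_approximation_of_sector_projection_general
    {n : Type*} [Fintype n] [DecidableEq n]
    (H : Matrix n n ℂ) (hH : H.IsHermitian)
    (σin σout : Finset ℝ)
    (hspec : ∀ κ : ℝ,
      Module.End.HasEigenvalue (Matrix.toEuclideanLin H) (κ : ℂ) ↔ κ ∈ σin ∪ σout)
    (g : ℝ) (hg : 0 < g)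
    (hgap : ∀ lam ∈ σin, ∀ κ ∈ σout, g ≤ |lam - κ|)
    (α : ℝ) (hα : 0 < α)
    (a : ℝ → ℝ) (ha_pos : ∀ lam ∈ σin, 0 < a lam) (ha_le : ∀ lam ∈ σin, a lam ≤ 1)
    (ha_interp : ∀ κ' ∈ σin,
      ∑ lam ∈ σin, a lam * Real.exp (-(κ' - lam) ^ 2 / (4 * α)) = 1) :
    ‖(∑ lam ∈ σin, a lam •
          ∑ᶠ κ : ℝ, Real.exp (-(κ - lam) ^ 2 / (4 * α)) • eigProj H κ) -
        ∑ lam ∈ σin, eigProj H lam‖ ≤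
      (σin.card : ℝ) * Real.exp (-g ^ 2 / (4 * α)) := by
  simp_rw [finsum_smul_eigProj_eq_sum fun κ => (hspec κ).1]
  rw [sum_smul_sum_sub_sum_eq_sum_smul Finset.subset_union_left]
  refine hH.norm_sum_smul_eigProj_le _ (by positivity) fun κ hκ => ?_
  by_cases hin : κ ∈ σin
  · rw [if_pos hin, ha_interp κ hin, sub_self, abs_zero]
    positivity
  · have hout : κ ∈ σout := (Finset.mem_union.mp hκ).resolve_left hin
    rw [if_neg hin, sub_zero, abs_of_nonneg (Finset.sum_nonneg fun lam hlam =>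
      mul_nonneg (ha_pos lam hlam).le (Real.exp_nonneg _))]
    exact sum_mul_gaussian_le_card_mul hα.le hg.le ha_le fun lam hlam =>
      hgap lam hlam κ hout

/-- For a hermitian matrix whose spectrum splits into a sector `σ_in` and a remainder `σ_out`
separated by a gap `g`, the Gaussian combination `𝒫 = Σ_{λ∈σ_in} a_λ 𝒫_λ` (with interpolation
coefficients `a_λ`) approximates the sector projection `P` with error `|σ_in| e^{-g²/(4α)}`. -/
theorem gaussian_approximation_of_sector_projection
    {n : Type*} [Fintype n] [DecidableEq n]
    (H : Matrix n n ℂ) (hH : H.IsHermitian)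
    (σin σout : Finset ℝ) (hdisj : Disjoint σin σout)
    (hspec : ∀ κ : ℝ,
      Module.End.HasEigenvalue (Matrix.toEuclideanLin H) (κ : ℂ) ↔ κ ∈ σin ∪ σout)
    (g : ℝ) (hg : 0 < g)
    (hgap : ∀ lam ∈ σin, ∀ κ ∈ σout, g ≤ |lam - κ|)
    (α : ℝ) (hα : 0 < α)
    (a : ℝ → ℝ) (ha_pos : ∀ lam ∈ σin, 0 < a lam) (ha_le : ∀ lam ∈ σin, a lam ≤ 1)
    (ha_interp : ∀ κ' ∈ σin,
      ∑ lam ∈ σin, a lam * Real.exp (-(κ' - lam) ^ 2 / (4 * α)) = 1) :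
    ‖(∑ lam ∈ σin, a lam •
          ∑ᶠ κ : ℝ, Real.exp (-(κ - lam) ^ 2 / (4 * α)) • eigProj H κ) -
        ∑ lam ∈ σin, eigProj H lam‖ ≤
      (σin.card : ℝ) * Real.exp (-g ^ 2 / (4 * α)) :=
  gaussian_approximation_of_sector_projection_general H hH σin σout hspec g hg hgap α hα a ha_pos
    ha_le ha_interp
end

section
/- Let ι be a nonempty finite type and M : Matrix ι ι ℝ a matrix with M i i = 1 for all i, M i j ≥ 0 for all i ≠ j, and Σ_{j ≠ i} M i j < 1/2 for every i. Then M is invertible, and the unique vector a : ι → ℝ with M.mulVec a = (fun _ => 1) satisfies 0 < a i ≤ 1 for every i. (This provides the coefficients 0 < a_λ ≤ 1 solving the Gaussian interpolation system Σ_λ a_λ e^{−(κ'−λ)²/(4α)} = 1 on a gapped spectral sector.) -/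
/-- A matrix with unit diagonal, nonnegative off-diagonal entries, and off-diagonal row sums
less than `1/2` is invertible, and the unique solution `a` of `M a = (1,…,1)` satisfies
`0 < a i ≤ 1` for every `i`. -/
theorem diagonally_dominant_interpolation_coefficients
    {ι : Type*} [Fintype ι] [Nonempty ι] [DecidableEq ι]
    (M : Matrix ι ι ℝ)
    (hdiag : ∀ i, M i i = 1)
    (hoff : ∀ i j, i ≠ j → 0 ≤ M i j)
    (hsum : ∀ i, ∑ j ∈ Finset.univ.erase i, M i j < 1 / 2) :
    IsUnit M ∧
      ∀ a : ι → ℝ, M.mulVec a = (fun _ => 1) → ∀ i, 0 < a i ∧ a i ≤ 1 := by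
  have hsum0 : ∀ i, 0 ≤ ∑ j ∈ Finset.univ.erase i, M i j := fun i =>
    Finset.sum_nonneg fun j hj => hoff i j (Finset.ne_of_mem_erase hj).symm
  constructor
  · have hdet : M.det ≠ 0 := by
      apply det_ne_zero_of_sum_row_lt_diag
      intro k
      calc ∑ j ∈ Finset.univ.erase k, ‖M k j‖
          = ∑ j ∈ Finset.univ.erase k, M k j := by
            refine Finset.sum_congr rfl fun j hj => ?_
            exact Real.norm_of_nonneg (hoff k j (Finset.ne_of_mem_erase hj).symm)
        _ < 1 / 2 := hsum k
        _ ≤ ‖M k k‖ := by rw [hdiag k, norm_one]; norm_num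
    exact (Matrix.isUnit_iff_isUnit_det M).mpr (isUnit_iff_ne_zero.mpr hdet)
  · intro a ha i
    obtain ⟨p, _, hp⟩ := Finset.exists_max_image Finset.univ a ⟨i, Finset.mem_univ i⟩
    obtain ⟨q, _, hq⟩ := Finset.exists_min_image Finset.univ a ⟨i, Finset.mem_univ i⟩
    have key : ∀ k, a k + ∑ j ∈ Finset.univ.erase k, M k j * a j = 1 := by
      intro k
      have h := congrFun ha k
      simp only [Matrix.mulVec, dotProduct] at h
      rw [← h, ← Finset.sum_erase_add Finset.univ _ (Finset.mem_univ k), hdiag k, one_mul]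
      ring
    have h1 : a p + (∑ j ∈ Finset.univ.erase p, M p j) * a q ≤ 1 := by
      rw [← key p, Finset.sum_mul]
      gcongr with j hj
      · exact hoff p j (Finset.ne_of_mem_erase hj).symm
      · exact hq j (Finset.mem_univ j)
    have h2 : 1 ≤ a q + (∑ j ∈ Finset.univ.erase q, M q j) * a p := by
      rw [← key q, Finset.sum_mul]
      gcongr with j hj
      · exact hoff q j (Finset.ne_of_mem_erase hj).symm
      · exact hp j (Finset.mem_univ j)
    have hsp := hsum p
    have hsq := hsum q
    have hsp0 := hsum0 p
    have hsq0 := hsum0 q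
    have hip := hp i (Finset.mem_univ i)
    have hiq := hq i (Finset.mem_univ i)
    have haq : 1 - (∑ j ∈ Finset.univ.erase q, M q j) * a p ≤ a q := by linarith
    have hmul := mul_le_mul_of_nonneg_left haq hsp0
    have hmul2 := mul_le_mul_of_nonneg_left hsq.le hsp0
    have hle1 : a p ≤ 1 := by nlinarith [mul_nonneg hsp0 hsq0]
    constructor
    · nlinarith
    · linarith
end

section
/- Let H₀ and H₁ be hermitian n×n complex matrices, let a ≤ b be reals and g > 0, and assume spectrum(H₀) ∩ ((a − g, a) ∪ (b, b + g)) = ∅. Set ε := ‖H₁ − H₀‖ and assume ε ≤ g/4. Then ‖P_{(a−g/2, b+g/2)}(H₁) − P_{[a,b]}(H₀)‖ ≤ 4(b − a + g)·ε/g². (Lipschitz continuity of the spectral projection onto a g-gapped sector under norm-small perturbations: ‖P(s₀+ε) − P(s₀)‖ = O(ε).) -/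
open scoped Matrix.Norms.L2Operator

/-- The spectral projection of `H` onto a set `I ⊆ ℝ`, i.e. `Σ_{κ ∈ spectrum(H) ∩ I} Q_κ(H)`
(the summands vanish off the spectrum, so the sum is finite). -/
noncomputable def specProj {n : Type*} [Fintype n] [DecidableEq n]
    (H : Matrix n n ℂ) (I : Set ℝ) : Matrix n n ℂ :=
  ∑ᶠ κ ∈ I, eigProj H κ

/-!
The spectral projection onto the part of the spectrum inside a circle is the Riesz integral
`(2πi)⁻¹ ∮ (z - H)⁻¹ dz`. Take the circle centred at `(a + b) / 2` through `a - g/2` and `b + g/2`,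
of radius `R = (b - a + g) / 2`. The gap keeps the eigenvalues of `H₀` at distance `≥ g/2` from it,
and since every eigenvalue of `H₁` lies within `ε` of one of `H₀` (a Weyl-type bound), those of
`H₁` stay at distance `≥ g/4`. By the second resolvent identity, on the circle
`‖(z - H₁)⁻¹ - (z - H₀)⁻¹‖ ≤ (4/g) ε (2/g)`, and integrating over a contour of length `2πR` gives
`‖P₁ - P₀‖ ≤ R · 8ε/g² = 4(b - a + g)ε/g²`.
-/

open Matrix Metric Complex
open scoped InnerProductSpace Real

lemma Matrix.norm_toEuclideanLin_apply_le {n : Type*} [Fintype n] [DecidableEq n]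
    (M : Matrix n n ℂ) (v : EuclideanSpace ℂ n) : ‖toEuclideanLin M v‖ ≤ ‖M‖ * ‖v‖ :=
  (toEuclideanCLM (n := n) (𝕜 := ℂ) M).le_opNorm v

open Classical in
lemma circleIntegral_sub_inv {c w : ℂ} {R : ℝ} (hR : 0 ≤ R) (hw : w ∉ sphere c R) :
    (∮ z in C(c, R), (z - w)⁻¹) = if w ∈ ball c R then 2 * π * I else 0 := by
  split_ifs with hball
  · exact circleIntegral.integral_sub_inv_of_mem_ball hball
  · refine DiffContOnCl.circleIntegral_eq_zero hR <|
      DifferentiableOn.diffContOnCl_ball (U := {w}ᶜ) ?_ ?_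
    · exact (differentiableOn_id.sub_const w).inv fun z hz => sub_ne_zero.mpr hz
    · rw [← ball_union_sphere]
      rintro z (hz | hz) rfl <;> contradiction

lemma abs_abs_sub_sub_le_norm_sub {c R κ : ℝ} {z : ℂ} (hz : z ∈ sphere (c : ℂ) R) :
    |(|κ - c| - R)| ≤ ‖z - κ‖ :=
  calc |(|κ - c| - R)| = |dist (κ : ℂ) c - dist z c| := by
        rw [mem_sphere.mp hz, isometry_ofReal.dist_eq, Real.dist_eq]
    _ ≤ dist (κ : ℂ) z := abs_dist_sub_le _ _ _
    _ = ‖z - κ‖ := by rw [dist_comm, dist_eq_norm]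

lemma half_le_abs_abs_sub_sub {a b g κ : ℝ} (hab : a ≤ b)
    (hκ : κ ∉ Set.Ioo (a - g) a ∪ Set.Ioo b (b + g)) :
    g / 2 ≤ |(|κ - (a + b) / 2| - (b - a + g) / 2)| := by
  simp only [Set.mem_union, Set.mem_Ioo, not_or, not_and, not_lt] at hκ
  grind

lemma mem_Icc_iff_mem_Ioo_of_notMem {a b g κ : ℝ} (hg : 0 < g)
    (hκ : κ ∉ Set.Ioo (a - g) a ∪ Set.Ioo b (b + g)) :
    κ ∈ Set.Icc a b ↔ κ ∈ Set.Ioo (a - g / 2) (b + g / 2) := by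
  simp only [Set.mem_union, Set.mem_Ioo, Set.mem_Icc, not_or, not_and, not_lt] at hκ ⊢
  grind

namespace Matrix.IsHermitian

variable {n : Type*} [Fintype n] [DecidableEq n]

section

variable {H : Matrix n n ℂ} (hH : H.IsHermitian)

lemma toEuclideanLin_eigenvectorBasis (i : n) :
    toEuclideanLin H (hH.eigenvectorBasis i) = (hH.eigenvalues i : ℂ) • hH.eigenvectorBasis i :=
  WithLp.ofLp_injective 2 (hH.mulVec_eigenvectorBasis i)

lemma eigenvectorBasis_mem_eigenspace (i : n) :
    hH.eigenvectorBasis i ∈ Module.End.eigenspace (toEuclideanLin H) (hH.eigenvalues i : ℂ) :=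
  Module.End.mem_eigenspace_iff.mpr (hH.toEuclideanLin_eigenvectorBasis i)

lemma hasEigenvalue_eigenvalues (i : n) :
    Module.End.HasEigenvalue (toEuclideanLin H) (hH.eigenvalues i : ℂ) :=
  Module.End.hasEigenvalue_of_hasEigenvector
    ⟨hH.eigenvectorBasis_mem_eigenspace i, hH.eigenvectorBasis.orthonormal.ne_zero i⟩

lemma toEuclideanLin_eigProj_apply (κ : ℝ) (v : EuclideanSpace ℂ n) :
    toEuclideanLin (eigProj H κ) v = ∑ i,
      if hH.eigenvalues i = κ then ⟪hH.eigenvectorBasis i, v⟫_ℂ • hH.eigenvectorBasis i else 0 := by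
  set E := Module.End.eigenspace (toEuclideanLin H) (κ : ℂ)
  rw [eigProj, LinearEquiv.apply_symm_apply]
  change (E.orthogonalProjectionOnto v : EuclideanSpace ℂ n) = _
  conv_lhs => rw [← hH.eigenvectorBasis.sum_repr' v]
  simp only [map_sum, map_smul, Submodule.coe_sum, Submodule.coe_smul]
  refine Finset.sum_congr rfl fun i _ => ?_
  split_ifs with h
  · subst h
    rw [Submodule.orthogonalProjectionOnto_mem_subspace_eq_self
      ⟨_, hH.eigenvectorBasis_mem_eigenspace i⟩]
  · rw [Submodule.orthogonalProjectionOnto_apply_of_mem_orthogonal, Submodule.coe_zero,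
      smul_zero]
    intro u hu
    exact inner_eq_zero_symm.mp <|
      (isSymmetric_toEuclideanLin_iff.mpr hH).orthogonalFamily_eigenspaces (by exact_mod_cast h)
        ⟨_, hH.eigenvectorBasis_mem_eigenspace i⟩ ⟨u, hu⟩

lemma eigProj_eq_zero {κ : ℝ} (hκ : ∀ i, hH.eigenvalues i ≠ κ) : eigProj H κ = 0 :=
  toEuclideanLin.injective <| LinearMap.ext fun v => by
    simp [hH.toEuclideanLin_eigProj_apply, hκ]

lemma specProj_eq_sum (I : Set ℝ) [DecidablePred (· ∈ I)] :
    specProj H I = ∑ κ ∈ (Finset.univ.image hH.eigenvalues).filter (· ∈ I), eigProj H κ := by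
  refine finsum_mem_eq_sum_of_inter_support_eq _ (Set.ext fun κ => ?_)
  simp only [Set.mem_inter_iff, Function.mem_support, Finset.coe_filter, Finset.mem_image,
    Finset.mem_univ, true_and, Set.mem_ofPred_eq]
  refine ⟨fun ⟨hI, h0⟩ => ⟨⟨?_, hI⟩, h0⟩, fun ⟨⟨_, hI⟩, h0⟩ => ⟨hI, h0⟩⟩
  by_contra! h
  exact h0 (hH.eigProj_eq_zero h)

lemma specProj_congr {I J : Set ℝ} (h : ∀ i, hH.eigenvalues i ∈ I ↔ hH.eigenvalues i ∈ J) :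
    specProj H I = specProj H J := by
  classical
  rw [hH.specProj_eq_sum, hH.specProj_eq_sum]
  exact Finset.sum_congr (Finset.filter_congr (Finset.forall_mem_image.mpr fun i _ => h i))
    fun _ _ => rfl

/-- `f(H) = Σ_κ f(κ) Q_κ(H)`, the eigenvalues `κ` of `H` counted once each. -/
noncomputable def spectralSum (f : ℝ → ℂ) : Matrix n n ℂ :=
  ∑ κ ∈ Finset.univ.image hH.eigenvalues, f κ • eigProj H κ

lemma toEuclideanLin_spectralSum_apply (f : ℝ → ℂ) (v : EuclideanSpace ℂ n) :
    toEuclideanLin (hH.spectralSum f) v =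
      ∑ i, (f (hH.eigenvalues i) * ⟪hH.eigenvectorBasis i, v⟫_ℂ) • hH.eigenvectorBasis i := by
  simp only [spectralSum, map_sum, map_smul, LinearMap.sum_apply,
    LinearMap.smul_apply, hH.toEuclideanLin_eigProj_apply, Finset.smul_sum, smul_ite, smul_zero]
  rw [Finset.sum_comm]
  refine Finset.sum_congr rfl fun i _ => ?_
  rw [Finset.sum_ite_eq, if_pos (Finset.mem_image_of_mem _ (Finset.mem_univ i)), smul_smul]

lemma norm_spectralSum_le {f : ℝ → ℂ} {C : ℝ} (hC : 0 ≤ C)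
    (hf : ∀ i, ‖f (hH.eigenvalues i)‖ ≤ C) : ‖hH.spectralSum f‖ ≤ C := by
  set e := hH.eigenvectorBasis
  refine ContinuousLinearMap.opNorm_le_bound _ hC fun v => ?_
  change ‖toEuclideanLin (hH.spectralSum f) v‖ ≤ C * ‖v‖
  have hcoord : ∑ i, (f (hH.eigenvalues i) * ⟪e i, v⟫_ℂ) • e i =
      e.repr.symm (WithLp.toLp 2 fun i => f (hH.eigenvalues i) * e.repr v i) := by
    simp [← e.sum_repr_symm, e.repr_apply_apply]
  rw [hH.toEuclideanLin_spectralSum_apply, hcoord, LinearIsometryEquiv.norm_map,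
    ← e.repr.norm_map v]
  refine (sq_le_sq₀ (norm_nonneg _) (by positivity)).mp ?_
  rw [EuclideanSpace.norm_sq_eq, mul_pow, EuclideanSpace.norm_sq_eq, Finset.mul_sum]
  refine Finset.sum_le_sum fun i _ => ?_
  rw [PiLp.toLp_apply, norm_mul, mul_pow]
  gcongr
  exact hf i

lemma smul_one_sub_mul_spectralSum_inv {z : ℂ} (hz : ∀ i, z ≠ hH.eigenvalues i) :
    (z • 1 - H) * hH.spectralSum (fun κ => (z - κ)⁻¹) = 1 := by
  refine toEuclideanLin.injective <| LinearMap.ext fun v => ?_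
  set e := hH.eigenvectorBasis
  have hterm : ∀ i, toEuclideanLin (z • 1 - H) (((z - hH.eigenvalues i)⁻¹ * ⟪e i, v⟫_ℂ) • e i) =
      ⟪e i, v⟫_ℂ • e i := by
    intro i
    rw [map_smul, map_sub, map_smul, toLpLin_one, LinearMap.sub_apply, LinearMap.smul_apply,
      LinearMap.id_apply, hH.toEuclideanLin_eigenvectorBasis, ← sub_smul, smul_smul,
      mul_right_comm, inv_mul_cancel₀ (sub_ne_zero.mpr (hz i)), one_mul]
  rw [toLpLin_mul_same, LinearMap.comp_apply, hH.toEuclideanLin_spectralSum_apply, map_sum,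
    Finset.sum_congr rfl fun i _ => hterm i, e.sum_repr', toLpLin_one, LinearMap.id_apply]

lemma resolvent_eq_spectralSum {z : ℂ} (hz : ∀ i, z ≠ hH.eigenvalues i) :
    resolvent H z = hH.spectralSum (fun κ => (z - κ)⁻¹) := by
  rw [resolvent, Algebra.algebraMap_eq_smul_one, ← nonsing_inv_eq_ringInverse]
  exact inv_eq_right_inv (hH.smul_one_sub_mul_spectralSum_inv hz)

lemma mem_resolventSet {z : ℂ} (hz : ∀ i, z ≠ hH.eigenvalues i) : z ∈ resolventSet ℂ H := by
  rw [spectrum.mem_resolventSet_iff, Algebra.algebraMap_eq_smul_one]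
  exact IsUnit.of_mul_eq_one _ (hH.smul_one_sub_mul_spectralSum_inv hz)

lemma norm_resolvent_le {z : ℂ} {d : ℝ} (hd : 0 < d) (hz : ∀ i, d ≤ ‖z - hH.eigenvalues i‖) :
    ‖resolvent H z‖ ≤ d⁻¹ := by
  have hne : ∀ i, z ≠ hH.eigenvalues i := fun i => norm_sub_pos_iff.mp (hd.trans_le (hz i))
  rw [hH.resolvent_eq_spectralSum hne]
  refine hH.norm_spectralSum_le (inv_nonneg.mpr hd.le) fun i => ?_
  rw [norm_inv]
  exact inv_anti₀ hd (hz i)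

lemma mul_norm_le_norm_smul_one_sub_apply {z : ℂ} {d : ℝ} (hd : 0 < d)
    (hz : ∀ i, d ≤ ‖z - hH.eigenvalues i‖) (v : EuclideanSpace ℂ n) :
    d * ‖v‖ ≤ ‖toEuclideanLin (z • 1 - H) v‖ := by
  have hne : ∀ i, z ≠ hH.eigenvalues i := fun i => norm_sub_pos_iff.mp (hd.trans_le (hz i))
  have hinv : resolvent H z * (z • 1 - H) = 1 := by
    rw [hH.resolvent_eq_spectralSum hne]
    exact mul_eq_one_comm.mp (hH.smul_one_sub_mul_spectralSum_inv hne)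
  rw [← le_inv_mul_iff₀ hd]
  calc ‖v‖ = ‖toEuclideanLin (resolvent H z) (toEuclideanLin (z • 1 - H) v)‖ := by
        rw [← LinearMap.comp_apply, ← toLpLin_mul_same, hinv, toLpLin_one, LinearMap.id_apply]
    _ ≤ ‖resolvent H z‖ * ‖toEuclideanLin (z • 1 - H) v‖ := norm_toEuclideanLin_apply_le _ _
    _ ≤ d⁻¹ * ‖toEuclideanLin (z • 1 - H) v‖ := by gcongr; exact hH.norm_resolvent_le hd hz

lemma circleIntegrable_resolvent {c : ℂ} {R : ℝ} (hR : 0 ≤ R)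
    (hc : ∀ i, (hH.eigenvalues i : ℂ) ∉ sphere c R) : CircleIntegrable (resolvent H) c R :=
  ContinuousOn.circleIntegrable hR fun _ hz =>
    (spectrum.hasDerivAt_resolvent_const_left (hH.mem_resolventSet fun i h => hc i (h ▸ hz)))
      |>.continuousAt.continuousWithinAt

theorem two_pi_I_inv_smul_circleIntegral_resolvent {c : ℂ} {R : ℝ} (hR : 0 ≤ R)
    (hc : ∀ i, (hH.eigenvalues i : ℂ) ∉ sphere c R) :
    (2 * π * I)⁻¹ • (∮ z in C(c, R), resolvent H z) = specProj H {κ : ℝ | (κ : ℂ) ∈ ball c R} := by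
  classical
  have hne : ∀ κ ∈ Finset.univ.image hH.eigenvalues, (κ : ℂ) ∉ sphere c R :=
    Finset.forall_mem_image.mpr fun i _ => hc i
  have hint : ∀ κ ∈ Finset.univ.image hH.eigenvalues,
      CircleIntegrable (fun z => (z - κ)⁻¹ • eigProj H κ) c R := fun κ hκ =>
    ContinuousOn.circleIntegrable hR <| ContinuousOn.smul
      ((continuousOn_id.sub continuousOn_const).inv₀ fun z hz => sub_ne_zero.mpr
        (ne_of_mem_of_not_mem hz (hne κ hκ))) continuousOn_const
  rw [circleIntegral.integral_congr hR fun z hz => hH.resolvent_eq_spectralSum fun i h =>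
      hc i (h ▸ hz), hH.specProj_eq_sum]
  simp only [spectralSum]
  rw [circleIntegral.integral_fun_sum hint, Finset.smul_sum, Finset.sum_filter]
  refine Finset.sum_congr rfl fun κ hκ => ?_
  rw [circleIntegral.integral_smul_const, circleIntegral_sub_inv hR (hne κ hκ)]
  simp only [Set.mem_ofPred_eq]
  split_ifs
  · rw [smul_smul, inv_mul_cancel₀ two_pi_I_ne_zero, one_smul]
  · rw [zero_smul, smul_zero]

end

lemma exists_abs_eigenvalues_sub_le_norm_sub {H₀ H₁ : Matrix n n ℂ} (hH₀ : H₀.IsHermitian)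
    (hH₁ : H₁.IsHermitian) (j : n) :
    ∃ i, |hH₁.eigenvalues j - hH₀.eigenvalues i| ≤ ‖H₁ - H₀‖ := by
  set μ := hH₁.eigenvalues j
  set v := hH₁.eigenvectorBasis j
  obtain ⟨i, -, hi⟩ := Finset.univ.exists_min_image (fun i => |μ - hH₀.eigenvalues i|)
    ⟨j, Finset.mem_univ j⟩
  refine ⟨i, le_of_not_gt fun hlt => ?_⟩
  have hdist : ∀ k, |μ - hH₀.eigenvalues i| ≤ ‖(μ : ℂ) - hH₀.eigenvalues k‖ := fun k => by
    rw [← ofReal_sub, norm_real, Real.norm_eq_abs]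
    exact hi k (Finset.mem_univ k)
  have hv : toEuclideanLin ((μ : ℂ) • 1 - H₀) v = toEuclideanLin (H₁ - H₀) v := by
    rw [map_sub, map_sub, map_smul, toLpLin_one, LinearMap.sub_apply, LinearMap.sub_apply,
      LinearMap.smul_apply, LinearMap.id_apply, hH₁.toEuclideanLin_eigenvectorBasis]
  have hv₁ : ‖v‖ = 1 := hH₁.eigenvectorBasis.orthonormal.1 j
  refine hlt.not_ge ?_
  calc |μ - hH₀.eigenvalues i| = |μ - hH₀.eigenvalues i| * ‖v‖ := by rw [hv₁, mul_one]
    _ ≤ ‖toEuclideanLin ((μ : ℂ) • 1 - H₀) v‖ :=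
      hH₀.mul_norm_le_norm_smul_one_sub_apply ((norm_nonneg _).trans_lt hlt) hdist v
    _ = ‖toEuclideanLin (H₁ - H₀) v‖ := by rw [hv]
    _ ≤ ‖H₁ - H₀‖ * ‖v‖ := norm_toEuclideanLin_apply_le _ _
    _ = ‖H₁ - H₀‖ := by rw [hv₁, mul_one]

theorem norm_specProj_sub_specProj_le {H₀ H₁ : Matrix n n ℂ} (hH₀ : H₀.IsHermitian)
    (hH₁ : H₁.IsHermitian) {c : ℂ} {R d₀ d₁ : ℝ} (hR : 0 ≤ R) (hd₀ : 0 < d₀) (hd₁ : 0 < d₁)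
    (h₀ : ∀ z ∈ sphere c R, ∀ i, d₀ ≤ ‖z - hH₀.eigenvalues i‖)
    (h₁ : ∀ z ∈ sphere c R, ∀ i, d₁ ≤ ‖z - hH₁.eigenvalues i‖) :
    ‖specProj H₁ {κ : ℝ | (κ : ℂ) ∈ ball c R} - specProj H₀ {κ : ℝ | (κ : ℂ) ∈ ball c R}‖ ≤
      R * (‖H₁ - H₀‖ / (d₀ * d₁)) := by
  have hc₀ : ∀ i, (hH₀.eigenvalues i : ℂ) ∉ sphere c R := fun i hi => by
    simpa using hd₀.trans_le (h₀ _ hi i)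
  have hc₁ : ∀ i, (hH₁.eigenvalues i : ℂ) ∉ sphere c R := fun i hi => by
    simpa using hd₁.trans_le (h₁ _ hi i)
  rw [← hH₁.two_pi_I_inv_smul_circleIntegral_resolvent hR hc₁,
    ← hH₀.two_pi_I_inv_smul_circleIntegral_resolvent hR hc₀, ← smul_sub,
    ← circleIntegral.integral_sub (hH₁.circleIntegrable_resolvent hR hc₁)
      (hH₀.circleIntegrable_resolvent hR hc₀)]
  refine circleIntegral.norm_two_pi_i_inv_smul_integral_le_of_norm_le_const hR fun z hz => ?_
  rw [spectrum.resolvent_sub_resolvent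
    (hH₁.mem_resolventSet fun i h => hc₁ i (h ▸ hz))
    (hH₀.mem_resolventSet fun i h => hc₀ i (h ▸ hz))]
  calc ‖resolvent H₁ z * (H₁ - H₀) * resolvent H₀ z‖
      ≤ ‖resolvent H₁ z‖ * ‖H₁ - H₀‖ * ‖resolvent H₀ z‖ := norm_mul₃_le
    _ ≤ d₁⁻¹ * ‖H₁ - H₀‖ * d₀⁻¹ := by
      gcongr
      exacts [hH₁.norm_resolvent_le hd₁ (h₁ z hz), hH₀.norm_resolvent_le hd₀ (h₀ z hz)]
    _ = ‖H₁ - H₀‖ / (d₀ * d₁) := by field_simp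

theorem norm_specProj_sub_specProj_le_of_norm_sub_le {H₀ H₁ : Matrix n n ℂ}
    (hH₀ : H₀.IsHermitian) (hH₁ : H₁.IsHermitian) {c : ℂ} {R d : ℝ} (hR : 0 ≤ R) (hd : 0 < d)
    (h₀ : ∀ z ∈ sphere c R, ∀ i, d ≤ ‖z - hH₀.eigenvalues i‖) (hε : ‖H₁ - H₀‖ ≤ d / 2) :
    ‖specProj H₁ {κ : ℝ | (κ : ℂ) ∈ ball c R} - specProj H₀ {κ : ℝ | (κ : ℂ) ∈ ball c R}‖ ≤
      2 * R * ‖H₁ - H₀‖ / d ^ 2 := by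
  have h₁ : ∀ z ∈ sphere c R, ∀ j, d / 2 ≤ ‖z - hH₁.eigenvalues j‖ := by
    intro z hz j
    obtain ⟨i, hi⟩ := hH₀.exists_abs_eigenvalues_sub_le_norm_sub hH₁ j
    have := norm_sub_le_norm_sub_add_norm_sub z (hH₁.eigenvalues j) (hH₀.eigenvalues i)
    rw [← ofReal_sub, norm_real, Real.norm_eq_abs] at this
    linarith [h₀ z hz i]
  calc _ ≤ R * (‖H₁ - H₀‖ / (d * (d / 2))) :=
        norm_specProj_sub_specProj_le hH₀ hH₁ hR hd (half_pos hd) h₀ h₁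
    _ = 2 * R * ‖H₁ - H₀‖ / d ^ 2 := by field_simp

end Matrix.IsHermitian

/-- Lipschitz continuity of the spectral projection onto a `g`-gapped sector `[a,b]` under
norm-small perturbations: `‖P_{(a-g/2,b+g/2)}(H₁) - P_{[a,b]}(H₀)‖ ≤ 4(b-a+g)ε/g²`. -/
theorem sector_projection_lipschitz
    {n : Type*} [Fintype n] [DecidableEq n]
    (H₀ H₁ : Matrix n n ℂ) (hH₀ : H₀.IsHermitian) (hH₁ : H₁.IsHermitian)
    (a b g : ℝ) (hab : a ≤ b) (hg : 0 < g)
    (hgap : ∀ κ : ℝ, Module.End.HasEigenvalue (Matrix.toEuclideanLin H₀) (κ : ℂ) →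
      κ ∉ Set.Ioo (a - g) a ∪ Set.Ioo b (b + g))
    (hε : ‖H₁ - H₀‖ ≤ g / 4) :
    ‖specProj H₁ (Set.Ioo (a - g / 2) (b + g / 2)) - specProj H₀ (Set.Icc a b)‖ ≤
      4 * (b - a + g) * ‖H₁ - H₀‖ / g ^ 2 := by
  set c : ℝ := (a + b) / 2
  set R : ℝ := (b - a + g) / 2
  have hgap₀ i : hH₀.eigenvalues i ∉ Set.Ioo (a - g) a ∪ Set.Ioo b (b + g) :=
    hgap _ (hH₀.hasEigenvalue_eigenvalues i)
  have h₀ : ∀ z ∈ sphere (c : ℂ) R, ∀ i, g / 2 ≤ ‖z - hH₀.eigenvalues i‖ := fun z hz i =>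
    (half_le_abs_abs_sub_sub hab (hgap₀ i)).trans (abs_abs_sub_sub_le_norm_sub hz)
  have hball : {κ : ℝ | (κ : ℂ) ∈ ball (c : ℂ) R} = Set.Ioo (a - g / 2) (b + g / 2) := by
    change ofReal ⁻¹' ball (c : ℂ) R = _
    rw [isometry_ofReal.preimage_ball, Real.ball_eq_Ioo]
    congr 1 <;> ring
  rw [hH₀.specProj_congr fun i => mem_Icc_iff_mem_Ioo_of_notMem hg (hgap₀ i), ← hball]
  calc _ ≤ 2 * R * ‖H₁ - H₀‖ / (g / 2) ^ 2 :=
        hH₀.norm_specProj_sub_specProj_le_of_norm_sub_le hH₁ (by positivity) (by positivity) h₀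
          (by linarith)
    _ = 4 * (b - a + g) * ‖H₁ - H₀‖ / g ^ 2 := by
      field_simp
      ring
end

section
/- Let E be a finite-dimensional complex inner product space and let P, Q : E →L[ℂ] E be orthogonal projections with operator norm ‖P − Q‖ ≤ 1/2. Let (ψ_i)_{i=1,…,D} be an orthonormal family whose span is the range of P, and let ψ' be a unit vector in the range of Q. Then there exist complex coefficients c_1, …, c_D with ψ' = Σ_{j=1}^D c_j · Q ψ_j and Σ_{j=1}^D |c_j| ≤ 2√D. (Bound ‖c_i‖₁ ≤ 2√D on the expansion coefficients of perturbed sector eigenvectors.) -/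
/-!
Since `‖P - Q‖ < 1`, the operator `T = 1 - Q (Q - P)` is a perturbation of the identity by less
than `1`, hence invertible with `‖T⁻¹‖ ≤ (1 - ‖P - Q‖)⁻¹ ≤ 2`, and `Q T = Q P`. So `ψ' = Q (P x)`
with `x = T⁻¹ ψ'`, and `z = P x` lies in the span of the `ψ j` with `‖z‖ ≤ 2`. Expanding `z` in
the orthonormal family, Bessel's inequality bounds the `ℓ²` norm of the coefficients by `2`,
and Cauchy–Schwarz turns this into the `ℓ¹` bound `2 √D`.
-/

open scoped InnerProductSpace

theorem Real.sum_le_sqrt_card_mul_sqrt_sum_sq {ι : Type*} (s : Finset ι) (f : ι → ℝ) :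
    ∑ i ∈ s, f i ≤ √(s.card) * √(∑ i ∈ s, f i ^ 2) := by
  simpa using Real.sum_mul_le_sqrt_mul_sqrt s (fun _ ↦ 1) f

theorem Orthonormal.exists_sum_smul_eq_and_sum_norm_le {𝕜 E ι : Type*} [RCLike 𝕜]
    [NormedAddCommGroup E] [InnerProductSpace 𝕜 E] [Fintype ι] {v : ι → E}
    (hv : Orthonormal 𝕜 v) {y : E} (hy : y ∈ Submodule.span 𝕜 (Set.range v)) :
    ∃ c : ι → 𝕜, ∑ i, c i • v i = y ∧ ∑ i, ‖c i‖ ≤ √(Fintype.card ι) * ‖y‖ := by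
  obtain ⟨c, rfl⟩ := (Submodule.mem_span_range_iff_exists_fun 𝕜).1 hy
  refine ⟨c, rfl, ?_⟩
  have bessel : ∑ i, ‖c i‖ ^ 2 ≤ ‖∑ i, c i • v i‖ ^ 2 := by
    simpa only [hv.inner_right_fintype] using hv.sum_inner_products_le (∑ i, c i • v i)
  calc ∑ i, ‖c i‖ ≤ √(Fintype.card ι) * √(∑ i, ‖c i‖ ^ 2) :=
        Real.sum_le_sqrt_card_mul_sqrt_sum_sq _ _
    _ ≤ √(Fintype.card ι) * ‖∑ i, c i • v i‖ := by
        gcongr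
        exact Real.sqrt_le_iff.2 ⟨norm_nonneg _, bessel⟩

theorem LinearMap.exists_apply_eq_and_norm_le_of_norm_sub_apply_le {𝕜 V : Type*} [Field 𝕜]
    [NormedAddCommGroup V] [Module 𝕜 V] [FiniteDimensional 𝕜 V] (T : V →ₗ[𝕜] V) {k : ℝ}
    (hk : k < 1) (hT : ∀ x, ‖x - T x‖ ≤ k * ‖x‖) (y : V) :
    ∃ x, T x = y ∧ (1 - k) * ‖x‖ ≤ ‖y‖ := by
  have bound : ∀ x, (1 - k) * ‖x‖ ≤ ‖T x‖ := fun x ↦ by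
    linarith [hT x, norm_le_norm_add_norm_sub' x (T x)]
  have injective : Function.Injective T := by
    rw [← LinearMap.ker_eq_bot, Submodule.eq_bot_iff]
    intro x hx
    have := bound x
    rw [LinearMap.mem_ker.1 hx, norm_zero] at this
    exact norm_le_zero_iff.1 (nonpos_of_mul_nonpos_right this (by linarith))
  obtain ⟨x, rfl⟩ := LinearMap.injective_iff_surjective.1 injective y
  exact ⟨x, rfl, bound x⟩

namespace IsStarProjection

variable {𝕜 E : Type*} [RCLike 𝕜] [NormedAddCommGroup E] [InnerProductSpace 𝕜 E]
  [CompleteSpace E]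

theorem norm_apply_le {P : E →L[𝕜] E} (hP : IsStarProjection P) (x : E) : ‖P x‖ ≤ ‖x‖ :=
  (P.le_opNorm x).trans (mul_le_of_le_one_left (norm_nonneg x) hP.norm_le)

theorem exists_mem_range_apply_eq_and_norm_le [FiniteDimensional 𝕜 E]
    {P Q : E →L[𝕜] E} (hP : IsStarProjection P) (hQ : IsStarProjection Q) (hPQ : ‖P - Q‖ < 1)
    {y : E} (hy : y ∈ LinearMap.range (Q : E →ₗ[𝕜] E)) :
    ∃ z ∈ LinearMap.range (P : E →ₗ[𝕜] E), Q z = y ∧ (1 - ‖P - Q‖) * ‖z‖ ≤ ‖y‖ := by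
  set T : E →L[𝕜] E := 1 - Q * (Q - P)
  have hT : ∀ x, ‖x - T x‖ ≤ ‖P - Q‖ * ‖x‖ := fun x ↦ by
    calc ‖x - T x‖ = ‖Q ((Q - P) x)‖ := by simp [T]
      _ ≤ ‖(Q - P) x‖ := hQ.norm_apply_le _
      _ ≤ ‖P - Q‖ * ‖x‖ := norm_sub_rev Q P ▸ (Q - P).le_opNorm x
  have hQT : Q * T = Q * P := by
    rw [mul_sub, mul_one, ← mul_assoc, hQ.isIdempotentElem.eq, mul_sub, hQ.isIdempotentElem.eq]
    abel
  obtain ⟨x, hxy, hx⟩ :=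
    LinearMap.exists_apply_eq_and_norm_le_of_norm_sub_apply_le (T : E →ₗ[𝕜] E) hPQ hT y
  obtain ⟨w, rfl⟩ := hy
  refine ⟨P x, ⟨x, rfl⟩, ?_, ?_⟩
  · calc Q (P x) = (Q * T) x := by rw [hQT]; rfl
      _ = Q (Q w) := congrArg Q hxy
      _ = Q w := congr($(hQ.isIdempotentElem.eq) w)
  · calc (1 - ‖P - Q‖) * ‖P x‖ ≤ (1 - ‖P - Q‖) * ‖x‖ := by
          gcongr
          exact hP.norm_apply_le x
      _ ≤ _ := hx

end IsStarProjection

/-- If `P, Q` are orthogonal projections with `‖P - Q‖ ≤ 1/2`, `(ψ_i)` is an orthonormal basis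
of the range of `P`, and `ψ'` is a unit vector in the range of `Q`, then `ψ'` expands as
`ψ' = Σ c_j • Q ψ_j` with coefficient bound `Σ |c_j| ≤ 2√D`. -/
theorem coefficient_bound_of_perturbed_eigenvector
    {E : Type*} [NormedAddCommGroup E] [InnerProductSpace ℂ E] [FiniteDimensional ℂ E]
    (P Q : E →L[ℂ] E)
    (hP_idem : P ∘L P = P) (hP_sa : IsSelfAdjoint P)
    (hQ_idem : Q ∘L Q = Q) (hQ_sa : IsSelfAdjoint Q)
    (hPQ : ‖P - Q‖ ≤ 1 / 2)
    (D : ℕ) (ψ : Fin D → E) (hortho : Orthonormal ℂ ψ)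
    (hspan : Submodule.span ℂ (Set.range ψ) = LinearMap.range (P : E →ₗ[ℂ] E))
    (ψ' : E) (hψ'_norm : ‖ψ'‖ = 1) (hψ'_mem : ψ' ∈ LinearMap.range (Q : E →ₗ[ℂ] E)) :
    ∃ c : Fin D → ℂ,
      ψ' = ∑ j, c j • Q (ψ j) ∧ ∑ j, ‖c j‖ ≤ 2 * Real.sqrt D := by
  obtain ⟨z, hz_mem, hz_eq, hz_norm⟩ :=
    IsStarProjection.exists_mem_range_apply_eq_and_norm_le ⟨hP_idem, hP_sa⟩ ⟨hQ_idem, hQ_sa⟩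
      (by linarith) hψ'_mem
  rw [← hspan] at hz_mem
  obtain ⟨c, hc_eq, hc_norm⟩ := hortho.exists_sum_smul_eq_and_sum_norm_le hz_mem
  have hz_le : ‖z‖ ≤ 2 := by nlinarith [norm_nonneg z]
  refine ⟨c, ?_, ?_⟩
  · rw [← hz_eq, ← hc_eq, map_sum]
    simp only [map_smul]
  · calc ∑ j, ‖c j‖ ≤ √D * ‖z‖ := by simpa using hc_norm
      _ ≤ √D * 2 := by gcongr
      _ = 2 * √D := mul_comm _ _
end

section
/- Let H₀ and V be n×n complex matrices, set H := H₀ + V, and for s ∈ ℝ let τ_s(V) := exp(isH₀) · V · exp(−isH₀). For t ∈ ℝ and n ≥ 1 define the iterated Bochner integral I_n(t) := ∫₀ᵗ dt₁ ∫₀^{t₁} dt₂ ⋯ ∫₀^{t_{n−1}} dt_n τ_{t_n}(V)⋯τ_{t₁}(V), and set I_0(t) := 1. Then the series Σ_{n=0}^∞ iⁿ · I_n(t) converges (HasSum) and its sum equals exp(itH) · exp(−itH₀); equivalently, exp(itH) = (Σ_{n=0}^∞ iⁿ I_n(t)) · exp(itH₀) (norm-convergent Dyson–Phillips series). -/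
open scoped Matrix.Norms.L2Operator

/-- The interaction-picture evolution `τ_s(V) = e^{isH₀} V e^{-isH₀}`. -/
noncomputable def interactionPicture {n : Type*} [Fintype n] [DecidableEq n]
    (H₀ V : Matrix n n ℂ) (s : ℝ) : Matrix n n ℂ :=
  NormedSpace.exp ((Complex.I * (s : ℂ)) • H₀) * V *
    NormedSpace.exp ((-(Complex.I * (s : ℂ))) • H₀)

/-- The `n`-th iterated Dyson integral
`I_n(t) = ∫₀ᵗ dt₁ ∫₀^{t₁} dt₂ ⋯ ∫₀^{t_{n-1}} dt_n τ_{t_n}(V)⋯τ_{t₁}(V)`,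
with the factor carrying the largest time `t₁` rightmost, and `I_0(t) = 1`. -/
noncomputable def dysonIter {n : Type*} [Fintype n] [DecidableEq n]
    (H₀ V : Matrix n n ℂ) : ℕ → ℝ → Matrix n n ℂ
  | 0, _ => 1
  | m + 1, t => ∫ s in (0:ℝ)..t, dysonIter H₀ V m s * interactionPicture H₀ V s

/-! The evolution `W(t) = exp(itH) exp(-itH₀)` solves `W' = W · iτ_t(V)`, `W(0) = 1`, and the
terms `iⁿ I_n` are the successive terms of Picard iteration for this linear equation. Hence the
partial sums `S_N` satisfy `S_{N+1}(t) = 1 + ∫₀ᵗ S_N · iτ(V)`, so the remainders `R_N = W - S_N` satisfy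
`R_{N+1}(t) = ∫₀ᵗ R_N · iτ(V)`, and iterating `‖R_{N+1}(u)‖ ≤ C |∫₀ᵘ ‖R_N‖|` gives the Picard
estimate `‖R_N(t)‖ ≤ M (C|t|)ᴺ / N!` → 0. The same estimate for the terms themselves gives
absolute convergence. -/

open MeasureTheory Filter Set
open scoped Nat Interval Topology

section IteratedIntegral

variable {E : Type*} [NormedAddCommGroup E] [NormedSpace ℝ E]

theorem norm_intervalIntegral_le_mul_pow_abs {g : ℝ → E} {u K : ℝ} {N : ℕ}
    (hg : ∀ s ∈ Ι 0 u, ‖g s‖ ≤ K * |s| ^ N) :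
    ‖∫ s in 0..u, g s‖ ≤ K * (|u| ^ (N + 1) / (N + 1)) := by
  have hint : IntegrableOn (fun s : ℝ => K * |s - 0| ^ N) (Ι 0 u) :=
    Continuous.integrableOn_uIoc (by fun_prop)
  calc ‖∫ s in 0..u, g s‖ = ‖∫ s in Ι 0 u, g s‖ :=
        intervalIntegral.norm_integral_eq_norm_integral_uIoc _
    _ ≤ ∫ s in Ι 0 u, K * |s - 0| ^ N :=
        norm_integral_le_of_norm_le hint
          (ae_restrict_of_forall_mem measurableSet_uIoc fun s hs => by simpa using hg s hs)
    _ = K * (|u| ^ (N + 1) / (N + 1)) := by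
        rw [integral_const_mul, integral_pow_abs_sub_uIoc, sub_zero]

theorem norm_le_mul_pow_div_factorial_of_eq_integral {f g : ℕ → ℝ → E} {t M C : ℝ} (hC : 0 ≤ C)
    (hf₀ : ∀ u ∈ uIcc 0 t, ‖f 0 u‖ ≤ M) (hg : ∀ N, ∀ u ∈ uIcc 0 t, ‖g N u‖ ≤ C * ‖f N u‖)
    (hf : ∀ N u, f (N + 1) u = ∫ s in 0..u, g N s) (N : ℕ) :
    ∀ u ∈ uIcc 0 t, ‖f N u‖ ≤ M * (C * |u|) ^ N / N ! := by
  induction N with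
  | zero => simpa using hf₀
  | succ N ih =>
    intro u hu
    have hsub : Ι 0 u ⊆ uIcc 0 t := uIoc_subset_uIcc.trans (uIcc_subset_uIcc left_mem_uIcc hu)
    rw [hf, mul_pow, Nat.factorial_succ]
    push_cast
    calc ‖∫ s in 0..u, g N s‖ ≤ M * C ^ (N + 1) / N ! * (|u| ^ (N + 1) / (N + 1)) := by
          refine norm_intervalIntegral_le_mul_pow_abs fun s hs => ?_
          calc ‖g N s‖ ≤ C * (M * (C * |s|) ^ N / N !) := (hg N s (hsub hs)).trans
                  (mul_le_mul_of_nonneg_left (ih s (hsub hs)) hC)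
            _ = M * C ^ (N + 1) / N ! * |s| ^ N := by ring
      _ = M * (C ^ (N + 1) * |u| ^ (N + 1)) / ((N + 1) * N !) := by
          field_simp

theorem tendsto_zero_of_eq_integral {f g : ℕ → ℝ → E} {t M C : ℝ} (hC : 0 ≤ C)
    (hf₀ : ∀ u ∈ uIcc 0 t, ‖f 0 u‖ ≤ M) (hg : ∀ N, ∀ u ∈ uIcc 0 t, ‖g N u‖ ≤ C * ‖f N u‖)
    (hf : ∀ N u, f (N + 1) u = ∫ s in 0..u, g N s) :
    Tendsto (fun N => f N t) atTop (𝓝 0) := by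
  refine squeeze_zero_norm
    (fun N => norm_le_mul_pow_div_factorial_of_eq_integral hC hf₀ hg hf N t right_mem_uIcc) ?_
  simpa [mul_div_assoc] using (FloorSemiring.tendsto_pow_div_factorial_atTop (C * |t|)).const_mul M

end IteratedIntegral

section DysonSeries

variable {𝔸 : Type*} [NormedRing 𝔸] [NormedSpace ℝ 𝔸]

noncomputable def dysonTerm (A : ℝ → 𝔸) : ℕ → ℝ → 𝔸
  | 0, _ => 1
  | m + 1, t => ∫ s in 0..t, dysonTerm A m s * A s

variable {A : ℝ → 𝔸}

theorem continuous_dysonTerm (hA : Continuous A) : ∀ m, Continuous (dysonTerm A m)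
  | 0 => continuous_const
  | m + 1 => intervalIntegral.continuous_primitive
      (fun _ _ => ((continuous_dysonTerm hA m).mul hA).intervalIntegrable _ _) 0

theorem sum_range_succ_dysonTerm (hA : Continuous A) (N : ℕ) (u : ℝ) :
    ∑ m ∈ Finset.range (N + 1), dysonTerm A m u
      = 1 + ∫ s in 0..u, (∑ m ∈ Finset.range N, dysonTerm A m s) * A s := by
  simp_rw [Finset.sum_range_succ', Finset.sum_mul]
  rw [intervalIntegral.integral_finsetSum (f := fun m s => dysonTerm A m s * A s)
    fun m _ => ((continuous_dysonTerm hA m).mul hA).intervalIntegrable _ _, add_comm]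
  rfl

variable [CompleteSpace 𝔸]

theorem eq_one_add_integral_of_hasDerivAt {W : ℝ → 𝔸} (hA : Continuous A)
    (hW : ∀ u, HasDerivAt W (W u * A u) u) (hW₀ : W 0 = 1) (u : ℝ) :
    W u = 1 + ∫ s in 0..u, W s * A s := by
  have hWc : Continuous W := continuous_iff_continuousAt.2 fun u => (hW u).continuousAt
  rw [intervalIntegral.integral_eq_sub_of_hasDerivAt (fun s _ => hW s)
    ((hWc.mul hA).intervalIntegrable _ _), hW₀, add_sub_cancel]

theorem hasSum_dysonTerm {W : ℝ → 𝔸} (hA : Continuous A)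
    (hW : ∀ u, HasDerivAt W (W u * A u) u) (hW₀ : W 0 = 1) (t : ℝ) :
    HasSum (fun m => dysonTerm A m t) (W t) := by
  have hWc : Continuous W := continuous_iff_continuousAt.2 fun u => (hW u).continuousAt
  obtain ⟨C, hC⟩ := isCompact_uIcc.exists_bound_of_continuousOn (s := uIcc 0 t) hA.continuousOn
  obtain ⟨M, hM⟩ := isCompact_uIcc.exists_bound_of_continuousOn (s := uIcc 0 t) hWc.continuousOn
  have hC₀ : 0 ≤ C := (norm_nonneg _).trans (hC 0 left_mem_uIcc)
  have hmul : ∀ (f : ℝ → 𝔸), ∀ u ∈ uIcc 0 t, ‖f u * A u‖ ≤ C * ‖f u‖ := fun f u hu =>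
    (norm_mul_le _ _).trans (by rw [mul_comm]; gcongr; exact hC u hu)
  have hsummable : Summable fun m => dysonTerm A m t := by
    refine Summable.of_norm_bounded
      ((Real.summable_pow_div_factorial (C * |t|)).mul_left ‖(1 : 𝔸)‖) fun m => ?_
    simpa [mul_div_assoc] using norm_le_mul_pow_div_factorial_of_eq_integral hC₀
      (f := dysonTerm A) (fun u _ => le_rfl) (fun N => hmul (dysonTerm A N)) (fun _ _ => rfl)
      m t right_mem_uIcc
  have hremainder : ∀ N u, W u - ∑ m ∈ Finset.range (N + 1), dysonTerm A m u
      = ∫ s in 0..u, (W s - ∑ m ∈ Finset.range N, dysonTerm A m s) * A s := by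
    intro N u
    rw [sum_range_succ_dysonTerm hA, eq_one_add_integral_of_hasDerivAt hA hW hW₀ u,
      add_sub_add_left_eq_sub]
    simp_rw [sub_mul]
    exact (intervalIntegral.integral_sub ((hWc.mul hA).intervalIntegrable _ _)
      (((continuous_finsetSum _ fun m _ => continuous_dysonTerm hA m).mul hA).intervalIntegrable
        _ _)).symm
  rw [hsummable.hasSum_iff_tendsto_nat, tendsto_iff_norm_sub_tendsto_zero]
  simp_rw [norm_sub_rev _ (W t), ← tendsto_zero_iff_norm_tendsto_zero]
  exact tendsto_zero_of_eq_integral hC₀ (by simpa using hM)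
    (fun N => hmul fun u => W u - ∑ m ∈ Finset.range N, dysonTerm A m u) hremainder

end DysonSeries

section ComplexBanachAlgebra

open NormedSpace

variable {𝔸 : Type*} [NormedRing 𝔸] [NormedAlgebra ℂ 𝔸]

theorem dysonTerm_smul (c : ℂ) (A : ℝ → 𝔸) (m : ℕ) (t : ℝ) :
    dysonTerm (c • A) m t = c ^ m • dysonTerm A m t := by
  induction m generalizing t with
  | zero => simp [dysonTerm]
  | succ m ih =>
    simp only [dysonTerm, ih, Pi.smul_apply, smul_mul_smul_comm, ← pow_succ,
      intervalIntegral.integral_smul]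

variable [CompleteSpace 𝔸]

-- `exp_add_of_commute` would ask for a `NormedAlgebra ℚ 𝔸` instance; the ball version over `ℂ`
-- does not.
theorem exp_neg_smul_mul_exp_smul (z : ℂ) (x : 𝔸) : exp ((-z) • x) * exp (z • x) = 1 := by
  rw [← exp_add_of_commute_of_mem_ball (𝕂 := ℂ) ((Commute.refl x).smul_left (-z) |>.smul_right z)
    ((expSeries_radius_eq_top ℂ 𝔸).symm ▸ edist_lt_top _ _)
    ((expSeries_radius_eq_top ℂ 𝔸).symm ▸ edist_lt_top _ _), ← add_smul, neg_add_cancel,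
    zero_smul, exp_zero]

theorem hasDerivAt_exp_mul_ofReal_smul (c : ℂ) (x : 𝔸) (u : ℝ) :
    HasDerivAt (fun s : ℝ => exp ((c * s) • x)) (c • (exp ((c * u) • x) * x)) u := by
  have hc : HasDerivAt (fun s : ℝ => c * s) c u := by
    simpa using (Complex.ofRealCLM.hasDerivAt (x := u)).const_mul c
  exact (hasDerivAt_exp_smul_const x (c * u)).scomp u hc

theorem hasDerivAt_exp_add_mul_exp_neg (c : ℂ) (x y : 𝔸) (u : ℝ) :
    HasDerivAt (fun s : ℝ => exp ((c * s) • (x + y)) * exp ((-(c * s)) • x))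
      (exp ((c * u) • (x + y)) * exp ((-(c * u)) • x) *
        (c • (exp ((c * u) • x) * y * exp ((-(c * u)) • x)))) u := by
  set E := exp ((c * u) • (x + y))
  set F := exp ((-(c * u)) • x)
  have hF : HasDerivAt (fun s : ℝ => exp ((-(c * s)) • x)) ((-c) • (F * x)) u := by
    simpa only [neg_mul] using hasDerivAt_exp_mul_ofReal_smul (-c) x u
  refine ((hasDerivAt_exp_mul_ofReal_smul c (x + y) u).mul hF).congr_deriv ?_
  have hFx : F * x = x * F := ((Commute.refl x).smul_left _).exp_left.eq
  have hFG : F * exp ((c * u) • x) = 1 := by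
    simpa only [F, neg_mul] using exp_neg_smul_mul_exp_smul (c * u) x
  calc c • (E * (x + y)) * F + E * ((-c) • (F * x))
      = c • (E * (x + y) * F - E * (x * F)) := by
        rw [hFx, neg_smul, mul_neg, smul_mul_assoc, mul_smul_comm, smul_sub, sub_eq_add_neg]
    _ = c • (E * (F * exp ((c * u) • x)) * y * F) := by
        rw [hFG]; noncomm_ring
    _ = E * F * (c • (exp ((c * u) • x) * y * F)) := by
        simp only [mul_smul_comm, mul_assoc]

end ComplexBanachAlgebra

section InteractionPicture

open NormedSpace

variable {n : Type*} [Fintype n] [DecidableEq n]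

theorem continuous_interactionPicture (H₀ V : Matrix n n ℂ) :
    Continuous (interactionPicture H₀ V) := by
  have hexp (c : ℂ) : Continuous fun s : ℝ => exp ((c * s) • H₀) :=
    continuous_iff_continuousAt.2 fun u => (hasDerivAt_exp_mul_ofReal_smul c H₀ u).continuousAt
  have hexp_neg : Continuous fun s : ℝ => exp ((-(Complex.I * s)) • H₀) := by
    simpa only [neg_mul] using hexp (-Complex.I)
  exact ((hexp Complex.I).mul continuous_const).mul hexp_neg

theorem dysonIter_eq_dysonTerm (H₀ V : Matrix n n ℂ) :
    ∀ m, dysonIter H₀ V m = dysonTerm (interactionPicture H₀ V) m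
  | 0 => rfl
  | m + 1 => funext fun t => by simp only [dysonIter, dysonTerm, dysonIter_eq_dysonTerm H₀ V m]

end InteractionPicture

open NormedSpace in
/-- Norm-convergent Dyson–Phillips series: `Σ_{n≥0} iⁿ I_n(t)` has sum
`exp(itH) exp(-itH₀)` where `H = H₀ + V`; equivalently
`exp(itH) = (Σ_n iⁿ I_n(t)) exp(itH₀)`. -/
theorem dyson_phillips_series
    {n : Type*} [Fintype n] [DecidableEq n]
    (H₀ V : Matrix n n ℂ) (t : ℝ) :
    HasSum (fun m : ℕ => (Complex.I ^ m) • dysonIter H₀ V m t)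
      (NormedSpace.exp ((Complex.I * (t : ℂ)) • (H₀ + V)) *
        NormedSpace.exp ((-(Complex.I * (t : ℂ))) • H₀)) ∧
    NormedSpace.exp ((Complex.I * (t : ℂ)) • (H₀ + V)) =
      (∑' m : ℕ, (Complex.I ^ m) • dysonIter H₀ V m t) *
        NormedSpace.exp ((Complex.I * (t : ℂ)) • H₀) := by
  have hsum := hasSum_dysonTerm ((continuous_interactionPicture H₀ V).const_smul Complex.I)
    (hasDerivAt_exp_add_mul_exp_neg Complex.I H₀ V) (by simp) t
  simp only [dysonTerm_smul, ← dysonIter_eq_dysonTerm] at hsum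
  refine ⟨hsum, ?_⟩
  rw [hsum.tsum_eq, mul_assoc, exp_neg_smul_mul_exp_smul, mul_one]
end

section
/- Let m, n be nonempty finite types, let R be a complex matrix indexed by m × n (i.e., R : Matrix (m × n) (m × n) ℂ), and let δ ≥ 0. Suppose that for every matrix B : Matrix n n ℂ one has ‖R · (1 ⊗ₖ B) − (1 ⊗ₖ B) · R‖ ≤ δ · ‖B‖, where 1 ⊗ₖ B is the Kronecker product of the identity on m with B. Then there exists a matrix S : Matrix m m ℂ with ‖R − S ⊗ₖ 1‖ ≤ δ. (Operators that almost commute with everything supported on the second factor are norm-close to an operator supported on the first factor; this is the normalized-partial-trace localization lemma.) -/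
/-!
Average the conjugates `(1 ⊗ₖ B)ᴴ R (1 ⊗ₖ B)` over the signed cyclic shifts `B` of the second
factor. Each conjugate is within `‖R (1 ⊗ₖ B) - (1 ⊗ₖ B) R‖ ≤ δ` of `R`, so the average is too.
The average is `S ⊗ₖ 1` with `S` the normalized partial trace of `R`: random signs kill the
off-diagonal entries of each block, and the shifts replace its diagonal by its mean.
-/

open scoped Matrix.Norms.L2Operator Kronecker

open Finset

theorem norm_inv_card_smul_sum_le {𝕜 E ι : Type*} [RCLike 𝕜] [SeminormedAddCommGroup E]
    [NormedSpace 𝕜 E] [Fintype ι] [Nonempty ι] {f : ι → E} {δ : ℝ} (hf : ∀ i, ‖f i‖ ≤ δ) :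
    ‖(Fintype.card ι : 𝕜)⁻¹ • ∑ i, f i‖ ≤ δ := by
  have hcard : (0 : ℝ) < Fintype.card ι := by exact_mod_cast Fintype.card_pos
  rw [norm_smul, norm_inv, RCLike.norm_natCast, inv_mul_le_iff₀ hcard]
  simpa [card_univ] using norm_sum_le_of_le univ fun i _ => hf i

section CStarRing

variable {E : Type*} [NormedRing E] [StarRing E] [CStarRing E]

theorem norm_sub_star_mul_mul_of_mem_unitary {u : E} (hu : u ∈ unitary E) (x : E) :
    ‖x - star u * x * u‖ = ‖x * u - u * x‖ := by
  have : x - star u * x * u = star u * (u * x - x * u) := by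
    rw [mul_sub, ← mul_assoc, Unitary.star_mul_self_of_mem hu, one_mul, mul_assoc]
  rw [this, CStarRing.norm_mem_unitary_mul _ (Unitary.star_mem hu), norm_sub_rev]

theorem norm_sub_inv_card_smul_sum_conj_le {𝕜 ι : Type*} [RCLike 𝕜] [NormedSpace 𝕜 E]
    [Fintype ι] [Nonempty ι] {u : ι → E} (hu : ∀ i, u i ∈ unitary E) {x : E} {δ : ℝ} (hx : ∀ i, ‖x * u i - u i * x‖ ≤ δ) :
    ‖x - (Fintype.card ι : 𝕜)⁻¹ • ∑ i, star (u i) * x * u i‖ ≤ δ := by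
  have hcard : (Fintype.card ι : 𝕜) ≠ 0 := Nat.cast_ne_zero.mpr Fintype.card_ne_zero
  have : x - (Fintype.card ι : 𝕜)⁻¹ • ∑ i, star (u i) * x * u i =
      (Fintype.card ι : 𝕜)⁻¹ • ∑ i, (x - star (u i) * x * u i) := by
    rw [sum_sub_distrib, smul_sub, sum_const, card_univ, ← Nat.cast_smul_eq_nsmul 𝕜, smul_smul,
      inv_mul_cancel₀ hcard, one_smul]
  rw [this]
  exact norm_inv_card_smul_sum_le fun i =>
    (norm_sub_star_mul_mul_of_mem_unitary (hu i) x).le.trans (hx i)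

end CStarRing

theorem Int.sum_units_mul_units {n : Type*} [Fintype n] [DecidableEq n] (a b : n) :
    ∑ s : n → ℤˣ, ((s a * s b : ℤˣ) : ℤ) = if a = b then 2 ^ Fintype.card n else 0 := by
  split_ifs with hab
  · subst hab
    simp [Int.units_mul_self, Fintype.card_units_int]
  · -- flipping the sign at `a` negates every term
    have hflip :
        ∑ s : n → ℤˣ, ((s a * s b : ℤˣ) : ℤ) = -∑ s : n → ℤˣ, ((s a * s b : ℤˣ) : ℤ) := by
      conv_lhs => rw [← Equiv.sum_comp (Equiv.mulLeft (Pi.mulSingle a (-1) : n → ℤˣ))]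
      rw [← sum_neg_distrib]
      refine sum_congr rfl fun s _ => ?_
      simp [Ne.symm hab]
    omega

namespace Matrix

section SignedShift

variable {n α : Type*} [Fintype n] [DecidableEq n] [CommRing α] [StarRing α]

def signDiagonal (s : n → ℤˣ) : Matrix n n α := diagonal fun c => ((s c : ℤ) : α)

theorem signDiagonal_mem_unitary (s : n → ℤˣ) : (signDiagonal s : Matrix n n α) ∈ unitary _ := by
  refine mem_unitaryGroup_iff'.mpr ?_
  rw [star_eq_conjTranspose, signDiagonal, diagonal_conjTranspose,
    diagonal_mul_diagonal, ← diagonal_one]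
  congr 1
  ext c
  simp [← Int.cast_mul, ← Units.val_mul, Int.units_mul_self]

theorem sum_star_signDiagonal_mul_mul (X : Matrix n n α) :
    ∑ s, star (signDiagonal s) * X * signDiagonal s =
      (2 ^ Fintype.card n : α) • diagonal X.diag := by
  ext a b
  have hsigns := congrArg (Int.cast : ℤ → α) (Int.sum_units_mul_units a b)
  push_cast at hsigns
  simp only [star_eq_conjTranspose, signDiagonal, diagonal_conjTranspose, sum_apply, mul_diagonal,
    diagonal_mul, Pi.star_apply, star_intCast, smul_apply, diagonal_apply, diag_apply, smul_eq_mul]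
  calc ∑ s : n → ℤˣ, ((s a : ℤ) : α) * X a b * (s b : ℤ)
      = (∑ s : n → ℤˣ, ((s a : ℤ) : α) * (s b : ℤ)) * X a b := by
        rw [sum_mul]; exact sum_congr rfl fun _ _ => by ring
    _ = _ := by
        rw [hsigns]; split_ifs with hab
        · rw [hab]
        · rw [zero_mul, mul_zero]

theorem sum_star_permMatrix_addRight_mul_diagonal_mul [AddGroup n] (v : n → α) :
    ∑ x : n, star ((Equiv.addRight x).permMatrix α) * diagonal v * (Equiv.addRight x).permMatrix α
      = (∑ c, v c) • 1 := by
  simp only [star_eq_conjTranspose, conjTranspose_permMatrix, PEquiv.toMatrix_toPEquiv_mul,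
    PEquiv.mul_toMatrix_toPEquiv, submatrix_submatrix, Function.comp_id, Function.id_comp,
    Equiv.Perm.inv_def, submatrix_diagonal_equiv]
  ext a b
  simp only [sum_apply, diagonal_apply, smul_apply, one_apply, smul_eq_mul, mul_ite, mul_one,
    mul_zero]
  split_ifs with hab
  · exact Fintype.sum_equiv (Equiv.subLeft a) _ _ fun x => by simp [sub_eq_add_neg]
  · exact sum_const_zero

theorem permMatrix_mem_unitary (σ : Equiv.Perm n) : σ.permMatrix α ∈ unitary (Matrix n n α) :=
  mem_unitaryGroup_iff'.mpr <| by
    rw [star_eq_conjTranspose, conjTranspose_permMatrix, ← permMatrix_mul, mul_inv_cancel,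
      permMatrix_one]

variable [AddGroup n]

def signedShift (g : (n → ℤˣ) × n) : Matrix n n α :=
  signDiagonal g.1 * (Equiv.addRight g.2).permMatrix α

theorem signedShift_mem_unitary (g : (n → ℤˣ) × n) : (signedShift g : Matrix n n α) ∈ unitary _ :=
  mul_mem (signDiagonal_mem_unitary g.1) (permMatrix_mem_unitary _)

theorem sum_star_signedShift_mul_mul (X : Matrix n n α) :
    ∑ g, star (signedShift g) * X * signedShift g = (2 ^ Fintype.card n * trace X) • 1 := by
  have hconj : ∀ g : (n → ℤˣ) × n, star (signedShift g) * X * signedShift g =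
      star ((Equiv.addRight g.2).permMatrix α) * (star (signDiagonal g.1) * X * signDiagonal g.1) *
        (Equiv.addRight g.2).permMatrix α := fun g => by
    simp only [signedShift, star_mul, mul_assoc]
  simp_rw [hconj, Fintype.sum_prod_type_right, ← sum_mul, ← mul_sum,
    sum_star_signDiagonal_mul_mul, mul_smul_comm, smul_mul_assoc, ← smul_sum,
    sum_star_permMatrix_addRight_mul_diagonal_mul,
    smul_smul, trace]

end SignedShift

section Kronecker

variable {m n α : Type*} [DecidableEq m] [CommRing α]

def partialTraceRight [Fintype n] {m' : Type*} (R : Matrix (m × n) (m' × n) α) : Matrix m m' α :=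
  of fun i j => ∑ c, R (i, c) (j, c)

theorem comp_symm_one_kronecker (B : Matrix n n α) :
    (comp m m n n α).symm ((1 : Matrix m m α) ⊗ₖ B) = diagonal fun _ => B := by
  ext i j a b
  by_cases hij : i = j <;> simp [hij]

variable [Fintype m] [Fintype n] [StarRing α]

theorem star_one_kronecker_mul_mul_apply (B : Matrix n n α) (R : Matrix (m × n) (m × n) α)
    (i j : m) (a b : n) :
    (star ((1 : Matrix m m α) ⊗ₖ B) * R * ((1 : Matrix m m α) ⊗ₖ B)) (i, a) (j, b) =
      (star B * (comp m m n n α).symm R i j * B) a b := by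
  change (compRingEquiv m n α).symm (star ((1 : Matrix m m α) ⊗ₖ B) * R * (1 ⊗ₖ B)) i j a b = _
  simp only [map_mul, compRingEquiv_symm_apply, star_eq_conjTranspose, conjTranspose_kronecker,
    conjTranspose_one, comp_symm_one_kronecker, diagonal_mul, mul_diagonal]

theorem sum_star_one_kronecker_mul_mul [DecidableEq n] {ι : Type*} [Fintype ι]
    {B : ι → Matrix n n α} {c : α}
    (hB : ∀ X, ∑ i, star (B i) * X * B i = (c * trace X) • 1) (R : Matrix (m × n) (m × n) α) :
    ∑ i, star ((1 : Matrix m m α) ⊗ₖ B i) * R * (1 ⊗ₖ B i) = c • (partialTraceRight R ⊗ₖ 1) := by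
  ext ⟨i, a⟩ ⟨j, b⟩
  rw [sum_apply]
  simp_rw [star_one_kronecker_mul_mul_apply]
  rw [← sum_apply, hB]
  simp [partialTraceRight, trace, one_apply]

end Kronecker

end Matrix

open Matrix

theorem almost_commuting_localization_general
    {m n : Type*} [Fintype m] [Fintype n] [Nonempty n]
    [DecidableEq m] [DecidableEq n]
    (R : Matrix (m × n) (m × n) ℂ) (δ : ℝ)
    (h : ∀ B : Matrix n n ℂ,
      ‖R * ((1 : Matrix m m ℂ) ⊗ₖ B) - ((1 : Matrix m m ℂ) ⊗ₖ B) * R‖ ≤ δ * ‖B‖) :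
    ∃ S : Matrix m m ℂ, ‖R - S ⊗ₖ (1 : Matrix n n ℂ)‖ ≤ δ := by
  have : NeZero (Fintype.card n) := ⟨Fintype.card_ne_zero⟩
  let : AddGroup n := (Fintype.equivFin n).addGroup
  have htwirl : (Fintype.card ((n → ℤˣ) × n) : ℂ)⁻¹ •
      ∑ g, star ((1 : Matrix m m ℂ) ⊗ₖ signedShift g) * R * (1 ⊗ₖ signedShift g) =
        ((Fintype.card n : ℂ)⁻¹ • partialTraceRight R) ⊗ₖ 1 := by
    rw [sum_star_one_kronecker_mul_mul sum_star_signedShift_mul_mul, smul_smul, smul_kronecker]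
    congr 1
    simp [Fintype.card_units_int]
  refine ⟨(Fintype.card n : ℂ)⁻¹ • partialTraceRight R, ?_⟩
  rw [← htwirl]
  have hU : ∀ g : (n → ℤˣ) × n, (1 : Matrix m m ℂ) ⊗ₖ signedShift g ∈ unitary _ :=
    fun g => kronecker_mem_unitary (one_mem _) (signedShift_mem_unitary g)
  refine norm_sub_inv_card_smul_sum_conj_le (𝕜 := ℂ) hU fun g => ?_
  calc _ ≤ δ * ‖signedShift g‖ := h _
    _ = δ := by rw [CStarRing.norm_of_mem_unitary (signedShift_mem_unitary (α := ℂ) g), mul_one]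

/-- Normalized-partial-trace localization: a matrix on a tensor product that almost commutes
(up to `δ‖B‖`) with every operator `1 ⊗ₖ B` supported on the second factor is within `δ` of an
operator `S ⊗ₖ 1` supported on the first factor. -/
theorem almost_commuting_localization
    {m n : Type*} [Fintype m] [Fintype n] [Nonempty m] [Nonempty n]
    [DecidableEq m] [DecidableEq n]
    (R : Matrix (m × n) (m × n) ℂ) (δ : ℝ) (hδ : 0 ≤ δ)
    (h : ∀ B : Matrix n n ℂ,
      ‖R * ((1 : Matrix m m ℂ) ⊗ₖ B) - ((1 : Matrix m m ℂ) ⊗ₖ B) * R‖ ≤ δ * ‖B‖) :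
    ∃ S : Matrix m m ℂ, ‖R - S ⊗ₖ (1 : Matrix n n ℂ)‖ ≤ δ :=
  almost_commuting_localization_general R δ h
end

section
/- (Kato's transformation function / exact spectral flow.) Let P : ℝ → Matrix n n ℂ be differentiable with derivative P', and suppose that for every s ∈ ℝ the matrix P(s) is hermitian and idempotent (P(s)·P(s) = P(s)). Let U : ℝ → Matrix n n ℂ satisfy U(0) = 1 and, for every s, HasDerivAt U ((P'(s)·P(s) − P(s)·P'(s))·U(s)) s. Then for every s ∈ ℝ the matrix U(s) is unitary (U(s)* · U(s) = 1 = U(s) · U(s)*) and P(s) · U(s) = U(s) · P(0); in particular P(s) = U(s) · P(0) · U(s)*. -/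
open scoped Matrix.Norms.L2Operator
open Matrix

/-!
Write `A = P'P - PP'`. Differentiating `P = Pᴴ` and `P² = P` gives `P'ᴴ = P'` and
`P'P + PP' = P'`, hence `PP'P = 0`; from these `A` is skew-hermitian and `P' = AP - PA`.
So `U` and `P` both flow along `A`, and for any `Q` flowing along `A` the conjugate `UᴴQU` has
derivative `Uᴴ(Aᴴ + A)QU = 0`. Applied to `Q = 1` and `Q = P` this gives `UᴴU = 1` and
`UᴴPU = P(0)`.
-/

section Algebra

variable {R : Type*} [Ring R] {p d : R}

theorem IsIdempotentElem.mul_mul_self_eq_zero (hp : IsIdempotentElem p)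
    (hd : d * p + p * d = d) : p * d * p = 0 := by
  have h : p * d = p * d * p + p * d :=
    calc p * d = p * (d * p + p * d) := by rw [hd]
      _ = p * d * p + (p * p) * d := by noncomm_ring
      _ = p * d * p + p * d := by rw [hp.eq]
  simpa using h

theorem IsIdempotentElem.commutator_sub_eq (hp : IsIdempotentElem p)
    (hd : d * p + p * d = d) : (d * p - p * d) * p - p * (d * p - p * d) = d := by
  have hpdp := hp.mul_mul_self_eq_zero hd
  calc (d * p - p * d) * p - p * (d * p - p * d)
      = d * (p * p) + (p * p) * d - 2 * (p * d * p) := by noncomm_ring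
    _ = d := by rw [hp.eq, hpdp, mul_zero, sub_zero, hd]

theorem IsSelfAdjoint.star_mul_sub_mul [StarRing R] {a b : R} (ha : IsSelfAdjoint a)
    (hb : IsSelfAdjoint b) : star (a * b - b * a) = -(a * b - b * a) := by
  rw [star_sub, star_mul, star_mul, ha.star_eq, hb.star_eq, neg_sub]

end Algebra

section Calculus

theorem HasDerivAt.isSelfAdjoint {F : Type*} [NormedAddCommGroup F] [NormedSpace ℝ F]
    [StarAddMonoid F] [ContinuousStar F] [StarModule ℝ F] {f : ℝ → F} {f' : F} {s : ℝ}
    (hf : HasDerivAt f f' s) (hsa : ∀ t, IsSelfAdjoint (f t)) : IsSelfAdjoint f' := by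
  have hstar : (fun t => star (f t)) = f := funext fun t => (hsa t).star_eq
  have h := hf.star
  rw [hstar] at h
  exact h.unique hf

variable {A : Type*} [NormedRing A] [NormedAlgebra ℝ A]

theorem HasDerivAt.mul_add_mul_eq_of_isIdempotentElem {p : ℝ → A} {p' : A} {s : ℝ}
    (hp : HasDerivAt p p' s) (hidem : ∀ t, IsIdempotentElem (p t)) :
    p' * p s + p s * p' = p' := by
  have h := hp.mul hp
  rw [show p * p = p from funext fun t => (hidem t).eq] at h
  exact h.unique hp

theorem star_mul_mul_eq_of_hasDerivAt [StarRing A] [ContinuousStar A] [StarModule ℝ A]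
    {u q a : ℝ → A} (hskew : ∀ s, star (a s) = -a s)
    (hu : ∀ s, HasDerivAt u (a s * u s) s)
    (hq : ∀ s, HasDerivAt q (a s * q s - q s * a s) s) (s t : ℝ) :
    star (u s) * q s * u s = star (u t) * q t * u t := by
  have hderiv : ∀ s, HasDerivAt (fun t => star (u t) * q t * u t) 0 s := by
    intro s
    have h : HasDerivAt (fun t => star (u t) * q t * u t) _ s :=
      ((hu s).star.mul (hq s)).mul (hu s)
    convert h using 1
    rw [star_mul, hskew s, Pi.mul_apply]
    noncomm_ring
  exact is_const_of_deriv_eq_zero (fun s => (hderiv s).differentiableAt)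
    (fun s => (hderiv s).deriv) s t

end Calculus

/-- Kato's transformation function (exact spectral flow): if `P(s)` is a differentiable path of
hermitian idempotents and `U` solves `U' = (P' P - P P') U`, `U(0) = 1`, then each `U(s)` is
unitary and intertwines the projections: `P(s) U(s) = U(s) P(0)`, hence
`P(s) = U(s) P(0) U(s)*`. -/
theorem kato_transformation_function
    {n : Type*} [Fintype n] [DecidableEq n]
    (P P' U : ℝ → Matrix n n ℂ)
    (hP : ∀ s, HasDerivAt P (P' s) s)
    (hherm : ∀ s, (P s).IsHermitian)
    (hidem : ∀ s, P s * P s = P s)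
    (hU0 : U 0 = 1)
    (hU : ∀ s, HasDerivAt U ((P' s * P s - P s * P' s) * U s) s) :
    ∀ s, ((U s)ᴴ * U s = 1 ∧ U s * (U s)ᴴ = 1) ∧
      P s * U s = U s * P 0 ∧ P s = U s * P 0 * (U s)ᴴ := by
  have hsa : ∀ s, IsSelfAdjoint (P s) := fun s => (hherm s).isSelfAdjoint
  have hidem' : ∀ s, IsIdempotentElem (P s) := hidem
  have hleib : ∀ s, P' s * P s + P s * P' s = P' s := fun s =>
    (hP s).mul_add_mul_eq_of_isIdempotentElem hidem'
  have hskew : ∀ s, star (P' s * P s - P s * P' s) = -(P' s * P s - P s * P' s) := fun s =>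
    ((hP s).isSelfAdjoint hsa).star_mul_sub_mul (hsa s)
  have hPflow : ∀ s, HasDerivAt P ((P' s * P s - P s * P' s) * P s -
      P s * (P' s * P s - P s * P' s)) s := fun s => by
    rw [(hidem' s).commutator_sub_eq (hleib s)]
    exact hP s
  have h1flow : ∀ s, HasDerivAt (fun _ => (1 : Matrix n n ℂ))
      ((P' s * P s - P s * P' s) * 1 - 1 * (P' s * P s - P s * P' s)) s := fun s => by
    simpa using hasDerivAt_const s (1 : Matrix n n ℂ)
  intro s
  have hunit : star (U s) * U s = 1 := by
    simpa [hU0] using star_mul_mul_eq_of_hasDerivAt hskew hU h1flow s 0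
  have hconj : star (U s) * P s * U s = P 0 := by
    simpa [hU0] using star_mul_mul_eq_of_hasDerivAt hskew hU hPflow s 0
  have hunit' : U s * star (U s) = 1 := mul_eq_one_comm.mp hunit
  have hPU : P s * U s = U s * P 0 := by
    rw [← hconj, ← mul_assoc, ← mul_assoc, hunit', one_mul]
  refine ⟨⟨hunit, hunit'⟩, hPU, ?_⟩
  rw [← hPU, mul_assoc, ← star_eq_conjTranspose, hunit', mul_one]
end

section
/- For the xy-model Hamiltonian H on the torus (Fin ν → ZMod L) with on-site potential u : Λ → ℝ satisfying u x ≥ 0 for all x: the matrix H is positive semidefinite, and H · ψ₀ = 0, where ψ₀ ∈ E is the vector with ψ₀(σ) = 1 if σ is the all-zero (all-spin-down) configuration and ψ₀(σ) = 0 otherwise. In particular the ground state energy of H is 0 and ψ₀ is a ground state. -/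
open scoped ComplexOrder

/-- Two sites of the discrete torus `Fin ν → ZMod L` are nearest neighbors if they differ by
`±1` in exactly one coordinate. -/
def IsNearestNeighbor {ν L : ℕ} (x y : Fin ν → ZMod L) : Prop :=
  ∃ i : Fin ν, y = Function.update x i (x i + 1) ∨ y = Function.update x i (x i - 1)

/-- `τ` is obtained from `σ` by exchanging the distinct values `σ x ≠ σ y` at a
nearest-neighbor pair `(x, y)`. -/
def IsExchange {ν L : ℕ} (σ τ : (Fin ν → ZMod L) → Fin 2) : Prop :=
  ∃ x y : Fin ν → ZMod L, IsNearestNeighbor x y ∧ σ x ≠ σ y ∧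
    τ = Function.update (Function.update σ x (σ y)) y (σ x)

open Classical in
/-- The xy-model Hamiltonian on the torus `Fin ν → ZMod L` with on-site potential `u`:
diagonal entry `Σ_{x : σ x = 1} (u x + 2ν)`, entry `-1` between configurations related by a
nearest-neighbor exchange of distinct spins, and `0` otherwise. -/
noncomputable def xyHam (ν L : ℕ) [NeZero L] (u : (Fin ν → ZMod L) → ℝ) :
    Matrix ((Fin ν → ZMod L) → Fin 2) ((Fin ν → ZMod L) → Fin 2) ℂ :=
  fun σ τ =>
    if σ = τ then
      ((∑ x : Fin ν → ZMod L, if σ x = 1 then u x + 2 * ν else 0 : ℝ) : ℂ)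
    else if IsExchange σ τ then -1 else 0

open Classical in
/-- The all-spin-down vector: `ψ₀(σ) = 1` exactly when `σ` is the all-zero configuration. -/
noncomputable def groundVec (ν L : ℕ) [NeZero L] : ((Fin ν → ZMod L) → Fin 2) → ℂ :=
  fun σ => if σ = fun _ => 0 then 1 else 0

/-!
`H` is real symmetric, and in each row its diagonal entry `∑_{σ x = 1} (u x + 2ν)` bounds the
number of nonzero off-diagonal entries (all equal to `-1`): every exchange from `σ` moves one of
its up spins to one of that site's `2ν` neighbours. By Gershgorin's circle theorem every eigenvalue
of `H` is then nonnegative. The all-down configuration has diagonal entry `0` and admits no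
exchange, so the column of `H` at it vanishes, i.e. `H ψ₀ = 0`.
-/

open Finset

namespace Matrix.IsHermitian

variable {𝕜 n : Type*} [RCLike 𝕜] [Fintype n] [DecidableEq n] {A : Matrix n n 𝕜}

theorem posSemidef_of_sum_norm_offDiag_le (hA : A.IsHermitian)
    (hdom : ∀ k, ∑ j ∈ univ.erase k, ‖A k j‖ ≤ RCLike.re (A k k)) : A.PosSemidef := by
  rw [hA.posSemidef_iff_eigenvalues_nonneg]
  intro i
  have hμ : Module.End.HasEigenvalue (toLin' A) (hA.eigenvalues i : 𝕜) := by
    rw [Module.End.hasEigenvalue_iff_mem_spectrum, spectrum_toLin']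
    exact spectrum.algebraMap_mem 𝕜 (hA.eigenvalues_mem_spectrum_real i)
  obtain ⟨k, hk⟩ := eigenvalue_mem_ball hμ
  rw [Metric.mem_closedBall, dist_eq_norm] at hk
  have hre : RCLike.re (A k k) - hA.eigenvalues i ≤ ‖(hA.eigenvalues i : 𝕜) - A k k‖ := by
    simpa [norm_sub_rev] using RCLike.re_le_norm (A k k - hA.eigenvalues i)
  simp only [Pi.zero_apply]
  linarith [hdom k]

end Matrix.IsHermitian

section XYModel

open Classical

variable {ν L : ℕ}

theorem IsNearestNeighbor.symm {x y : Fin ν → ZMod L} (h : IsNearestNeighbor x y) :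
    IsNearestNeighbor y x := by
  obtain ⟨i, rfl | rfl⟩ := h
  · exact ⟨i, Or.inr (by simp)⟩
  · exact ⟨i, Or.inl (by simp)⟩

theorem card_nearestNeighbor_le [NeZero L] (x : Fin ν → ZMod L) :
    #{y | IsNearestNeighbor x y} ≤ 2 * ν := by
  let step : Fin ν × Bool → Fin ν → ZMod L := fun ⟨i, b⟩ ↦
    Function.update x i (x i + if b then 1 else -1)
  calc #{y | IsNearestNeighbor x y}
      ≤ #(univ.image step) := by
        refine card_le_card fun y hy ↦ ?_
        obtain ⟨i, rfl | rfl⟩ := (mem_filter.mp hy).2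
        · exact mem_image.mpr ⟨(i, true), mem_univ _, by simp [step]⟩
        · exact mem_image.mpr ⟨(i, false), mem_univ _, by simp [step, sub_eq_add_neg]⟩
    _ ≤ 2 * ν := card_image_le.trans (by simp [mul_comm])

theorem IsExchange.eq_comp_swap {σ τ : (Fin ν → ZMod L) → Fin 2} (h : IsExchange σ τ) :
    ∃ x y, IsNearestNeighbor x y ∧ σ x ≠ σ y ∧ τ = σ ∘ Equiv.swap x y := by
  obtain ⟨x, y, hxy, hne, rfl⟩ := h
  exact ⟨x, y, hxy, hne, by rw [Equiv.swap_comm, Equiv.comp_swap_eq_update]⟩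

theorem isExchange_comm {σ τ : (Fin ν → ZMod L) → Fin 2} : IsExchange σ τ ↔ IsExchange τ σ := by
  suffices ∀ σ τ : (Fin ν → ZMod L) → Fin 2, IsExchange σ τ → IsExchange τ σ from
    ⟨this σ τ, this τ σ⟩
  intro σ τ h
  obtain ⟨x, y, hxy, hne, rfl⟩ := h.eq_comp_swap
  refine ⟨x, y, hxy, by simpa using hne.symm, ?_⟩
  rw [← Equiv.comp_swap_eq_update, Equiv.swap_comm]
  ext z
  simp

theorem not_isExchange_const (a : Fin 2) (τ : (Fin ν → ZMod L) → Fin 2) :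
    ¬IsExchange (fun _ ↦ a) τ := fun ⟨_, _, _, hne, _⟩ ↦ hne rfl

theorem card_isExchange_le [NeZero L] (σ : (Fin ν → ZMod L) → Fin 2) :
    #{τ | IsExchange σ τ} ≤ 2 * ν * #{x | σ x = 1} := by
  have hsub : ({τ | IsExchange σ τ} : Finset _) ⊆
      ({x | σ x = 1} : Finset _).biUnion fun x ↦ ({y | IsNearestNeighbor x y} : Finset _).image
        fun y ↦ σ ∘ Equiv.swap x y := by
    intro τ hτ
    obtain ⟨x, y, hxy, hne, rfl⟩ := (mem_filter.mp hτ).2.eq_comp_swap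
    simp only [mem_biUnion, mem_image, mem_filter, mem_univ, true_and]
    obtain hx | hx : σ x = 0 ∨ σ x = 1 := by omega
    · refine ⟨y, ?_, x, hxy.symm, Equiv.swap_comm y x ▸ rfl⟩
      omega
    · exact ⟨x, hx, y, hxy, rfl⟩
  calc #{τ | IsExchange σ τ} ≤ _ := card_le_card hsub
    _ ≤ #{x | σ x = 1} * (2 * ν) :=
      card_biUnion_le_card_mul _ _ _ fun x _ ↦ card_image_le.trans (card_nearestNeighbor_le x)
    _ = 2 * ν * #{x | σ x = 1} := mul_comm _ _

variable [NeZero L] (u : (Fin ν → ZMod L) → ℝ)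

theorem xyHam_isHermitian : (xyHam ν L u).IsHermitian := by
  ext σ τ
  by_cases h : σ = τ
  · subst h
    simp [xyHam]
  · simp [xyHam, h, Ne.symm h, isExchange_comm (σ := σ), apply_ite]

theorem sum_norm_xyHam_offDiag_le (σ : (Fin ν → ZMod L) → Fin 2) :
    ∑ τ ∈ univ.erase σ, ‖xyHam ν L u σ τ‖ ≤ #{τ | IsExchange σ τ} := by
  calc ∑ τ ∈ univ.erase σ, ‖xyHam ν L u σ τ‖
      = ∑ τ ∈ univ.erase σ, if IsExchange σ τ then (1 : ℝ) else 0 := by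
        refine sum_congr rfl fun τ hτ ↦ ?_
        simp [xyHam, Ne.symm (ne_of_mem_erase hτ), apply_ite]
    _ ≤ ∑ τ, if IsExchange σ τ then (1 : ℝ) else 0 :=
        sum_le_sum_of_subset_of_nonneg (erase_subset _ _) fun _ _ _ ↦ by positivity
    _ = #{τ | IsExchange σ τ} := by simp

theorem card_isExchange_le_re_xyHam_diag (hu : ∀ x, 0 ≤ u x) (σ : (Fin ν → ZMod L) → Fin 2) :
    (#{τ | IsExchange σ τ} : ℝ) ≤ RCLike.re (xyHam ν L u σ σ) := by
  calc (#{τ | IsExchange σ τ} : ℝ) ≤ 2 * ν * #{x | σ x = 1} := mod_cast card_isExchange_le σ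
    _ = ∑ x, if σ x = 1 then (2 * ν : ℝ) else 0 := by simp [sum_ite, mul_comm]
    _ ≤ ∑ x, if σ x = 1 then u x + 2 * ν else 0 :=
        sum_le_sum fun x _ ↦ by split_ifs <;> linarith [hu x]
    _ = RCLike.re (xyHam ν L u σ σ) := by simp [xyHam]

theorem xyHam_apply_zero (σ : (Fin ν → ZMod L) → Fin 2) : xyHam ν L u σ (fun _ ↦ 0) = 0 := by
  by_cases h : σ = fun _ ↦ 0
  · simp [xyHam, h]
  · simp [xyHam, h, isExchange_comm (τ := fun _ ↦ (0 : Fin 2)), not_isExchange_const]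

end XYModel

theorem xy_model_ground_state_general
    (ν L : ℕ) [NeZero L]
    (u : (Fin ν → ZMod L) → ℝ) (hu : ∀ x, 0 ≤ u x) :
    (xyHam ν L u).PosSemidef ∧ (xyHam ν L u).mulVec (groundVec ν L) = 0 := by
  refine ⟨(xyHam_isHermitian u).posSemidef_of_sum_norm_offDiag_le fun σ ↦
    (sum_norm_xyHam_offDiag_le u σ).trans (card_isExchange_le_re_xyHam_diag u hu σ), ?_⟩
  have hψ₀ : groundVec ν L = Pi.single (fun _ ↦ 0) 1 := by
    ext σ
    simp [groundVec, Pi.single_apply]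
  rw [hψ₀, Matrix.mulVec_single_one]
  ext σ
  exact xyHam_apply_zero u σ

/-- For nonnegative on-site potential, the xy-model Hamiltonian is positive semidefinite and
annihilates the all-spin-down vector `ψ₀`; in particular the ground state energy is `0` and
`ψ₀` is a ground state. -/
theorem xy_model_ground_state
    (ν L : ℕ) (hν : 1 ≤ ν) [NeZero L] (hL : 3 ≤ L)
    (u : (Fin ν → ZMod L) → ℝ) (hu : ∀ x, 0 ≤ u x) :
    (xyHam ν L u).PosSemidef ∧ (xyHam ν L u).mulVec (groundVec ν L) = 0 :=
  xy_model_ground_state_general ν L u hu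
end
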